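/- arXiv:2107.09813 — 3 statements merged into one kernel-verified Lean document; each statement's English description precedes it below -/
import Mathlib

section
/- For every pair of valuations μ, ν ∈ T, there exists a valuation ρ ∈ T with ρ ≤ μ and ρ ≤ ν; that is, the intervals (−∞,μ] = {ρ ∈ T : ρ ≤ μ} and (−∞,ν] = {ρ ∈ T : ρ ≤ ν} have nonempty intersection. -/
open Polynomial

namespace MLV

variable {K : Type*} [Field K] {Λ : Type*} [AddCommGroup Λ] [LinearOrder Λ] [IsOrderedAddMonoid Λ]

/-- A valuation on the field `K` with values in `Λ∞ = WithTop Λ`. -/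
structure FieldVal (K : Type*) (Λ : Type*) [Field K] [AddCommGroup Λ] [LinearOrder Λ] [IsOrderedAddMonoid Λ] where
  v : K → WithTop Λ
  map_one' : v 1 = 0
  map_zero' : v 0 = ⊤
  ne_top' : ∀ a : K, a ≠ 0 → v a ≠ ⊤
  map_mul' : ∀ a b : K, v (a * b) = v a + v b
  map_add' : ∀ a b : K, min (v a) (v b) ≤ v (a + b)

/-- `μ` is a node of the tree `T = T(Λ)`: a valuation on `K[x]` with values in `Λ∞`
whose restriction to `K` is `v`. -/
def IsValT (v : FieldVal K Λ) (μ : Polynomial K → WithTop Λ) : Prop :=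
  μ 1 = 0 ∧ μ 0 = ⊤ ∧ (∀ f g : Polynomial K, μ (f * g) = μ f + μ g) ∧
    (∀ f g : Polynomial K, min (μ f) (μ g) ≤ μ (f + g)) ∧
    ∀ a : K, μ (C a) = v.v a

/-- `g ∼_μ h` : `μ(g - h) > μ(g)`. -/
def MuEquiv (μ : Polynomial K → WithTop Λ) (g h : Polynomial K) : Prop :=
  μ g < μ (g - h)

/-- `h ∣_μ g` : `g ∼_μ f * h` for some `f`. -/
def MuDvd (μ : Polynomial K → WithTop Λ) (h g : Polynomial K) : Prop :=
  ∃ f : Polynomial K, MuEquiv μ g (f * h)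

/-- `g ∈ K[x] \ K` is `μ`-minimal if it `μ`-divides no nonzero polynomial of smaller degree. -/
def IsMuMinimal (μ : Polynomial K → WithTop Λ) (g : Polynomial K) : Prop :=
  0 < g.natDegree ∧
    ∀ f : Polynomial K, f ≠ 0 → f.degree < g.degree → ¬ MuDvd μ g f

/-- `g` is `μ`-irreducible. -/
def IsMuIrreducible (μ : Polynomial K → WithTop Λ) (g : Polynomial K) : Prop :=
  μ g ≠ ⊤ ∧ (¬ ∃ f : Polynomial K, MuEquiv μ (f * g) 1) ∧
    ∀ f h : Polynomial K, MuDvd μ g (f * h) → MuDvd μ g f ∨ MuDvd μ g h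

/-- A (Maclane-Vaquié) key polynomial for `μ`. -/
def IsKeyPol (μ : Polynomial K → WithTop Λ) (φ : Polynomial K) : Prop :=
  φ.Monic ∧ IsMuMinimal μ φ ∧ IsMuIrreducible μ φ

/-- An inner node: a valuation admitting key polynomials. -/
def IsInnerNode (μ : Polynomial K → WithTop Λ) : Prop :=
  ∃ φ : Polynomial K, IsKeyPol μ φ

/-- `deg(μ)`: the minimal degree of a key polynomial for `μ`. -/
noncomputable def degOf (μ : Polynomial K → WithTop Λ) : ℕ :=
  sInf {n : ℕ | ∃ φ : Polynomial K, IsKeyPol μ φ ∧ φ.natDegree = n}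

/-- A key polynomial of minimal degree. -/
def IsMinKeyPol (μ : Polynomial K → WithTop Λ) (φ : Polynomial K) : Prop :=
  IsKeyPol μ φ ∧ ∀ ψ : Polynomial K, IsKeyPol μ ψ → φ.natDegree ≤ ψ.natDegree

/-- the class `[φ]_μ` of key polynomials `μ`-equivalent to `φ`. -/
def KeyPolClass (μ : Polynomial K → WithTop Λ) (φ : Polynomial K) : Set (Polynomial K) :=
  {ψ : Polynomial K | IsKeyPol μ ψ ∧ MuEquiv μ ψ φ}

/-- The coefficient `a_s` of the `φ`-expansion `f = Σ_s a_s φ^s` (for `φ` monic nonconstant). -/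
noncomputable def expCoeff (φ f : Polynomial K) (s : ℕ) : Polynomial K :=
  (f /ₘ φ ^ s) %ₘ φ

/-- The augmented valuation `[μ; φ, γ]`, acting on `φ`-expansions by
`ν(Σ_s a_s φ^s) = min_s (μ(a_s) + s γ)`. -/
noncomputable def augVal (μ : Polynomial K → WithTop Λ) (φ : Polynomial K)
    (γ : WithTop Λ) (f : Polynomial K) : WithTop Λ :=
  (Finset.range (f.natDegree + 1)).inf'
    (Finset.nonempty_range_iff.mpr (Nat.succ_ne_zero _))
    fun s => μ (expCoeff φ f s) + s • γ

/-- The depth-zero valuation `ω_{a,δ}`, acting on `(x-a)`-expansions by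
`ω(Σ_s a_s (x-a)^s) = min_s (v(a_s) + s δ)`. -/
noncomputable def omegaVal (v : FieldVal K Λ) (a : K) (δ : WithTop Λ)
    (f : Polynomial K) : WithTop Λ :=
  (Finset.range (f.natDegree + 1)).inf'
    (Finset.nonempty_range_iff.mpr (Nat.succ_ne_zero _))
    fun s => v.v ((taylor a f).coeff s) + s • δ

/-- The tangent direction `t(μ,ν)`: monic polynomials of minimal degree with `μ(φ) < ν(φ)`. -/
def TangentDir (μ ν : Polynomial K → WithTop Λ) : Set (Polynomial K) :=
  {φ : Polynomial K | φ.Monic ∧ μ φ < ν φ ∧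
    ∀ ψ : Polynomial K, ψ.Monic → μ ψ < ν ψ → φ.natDegree ≤ ψ.natDegree}

/-- The set of finite values of `μ`. -/
def valSet (μ : Polynomial K → WithTop Λ) : Set Λ :=
  {γ : Λ | ∃ f : Polynomial K, μ f = (γ : WithTop Λ)}

/-- The value group `Γ_μ`. -/
def valGroup (μ : Polynomial K → WithTop Λ) : AddSubgroup Λ :=
  AddSubgroup.closure (valSet μ)

/-- `Γ = v(K^*)` as a subset of `Λ`. -/
def gammaSet (v : FieldVal K Λ) : Set Λ :=
  {γ : Λ | ∃ a : K, v.v a = (γ : WithTop Λ)}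

/-- The value group `Γ` of the base field valuation. -/
def baseGroup (v : FieldVal K Λ) : AddSubgroup Λ :=
  AddSubgroup.closure (gammaSet v)

/-- `μ` is commensurable over `v` : `Γ_μ/Γ` is torsion. -/
def IsCommensurable (v : FieldVal K Λ) (μ : Polynomial K → WithTop Λ) : Prop :=
  ∀ γ : Λ, γ ∈ valGroup μ → ∃ n : ℕ, 0 < n ∧ n • γ ∈ baseGroup v

/-- `Γ_μ^0 = {μ(a) : a ∈ K[x], 0 ≤ deg(a) < deg(μ)}`. -/
noncomputable def degZeroSet (μ : Polynomial K → WithTop Λ) : Set Λ :=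
  {δ : Λ | ∃ a : Polynomial K, a ≠ 0 ∧ a.natDegree < degOf μ ∧ μ a = (δ : WithTop Λ)}

/-- Equivalence of valuations: an order-preserving isomorphism `ι : Γ_μ → Γ_ν`
with `ν = ι ∘ μ`. -/
def ValEquiv (μ ν : Polynomial K → WithTop Λ) : Prop :=
  ∃ ι : valGroup μ ≃+ valGroup ν,
    Monotone ι ∧ (∀ f : Polynomial K, μ f = ⊤ ↔ ν f = ⊤) ∧
    ∀ (f : Polynomial K) (γ : Λ) (h : μ f = (γ : WithTop Λ)),
      ν f = ((ι ⟨γ, AddSubgroup.subset_closure ⟨f, h⟩⟩ : Λ) : WithTop Λ)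

/-- `β ∼_sme γ` : an order-preserving isomorphism `⟨Γ,β⟩ → ⟨Γ,γ⟩` fixing `Γ`
and mapping `β` to `γ`. -/
def SmeEquiv (v : FieldVal K Λ) (β γ : Λ) : Prop :=
  ∃ ι : (AddSubgroup.closure (gammaSet v ∪ {β}) : AddSubgroup Λ) ≃+
      (AddSubgroup.closure (gammaSet v ∪ {γ}) : AddSubgroup Λ),
    Monotone ι ∧
    (∀ (a : Λ) (ha : a ∈ gammaSet v),
      ((ι ⟨a, AddSubgroup.subset_closure (Set.mem_union_left _ ha)⟩ : Λ) = a)) ∧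
    ((ι ⟨β, AddSubgroup.subset_closure (Set.mem_union_right _ rfl)⟩ : Λ) = γ)

section Families

variable {ι : Type*} [LinearOrder ι]

/-- A totally ordered family of inner nodes of `T`, indexed order-isomorphically by a
totally ordered set, containing no maximal element. -/
def IsTOFamily (v : FieldVal K Λ) (ρ : ι → Polynomial K → WithTop Λ) : Prop :=
  (∀ i, IsValT v (ρ i)) ∧ (∀ i, IsInnerNode (ρ i)) ∧ StrictMono ρ ∧
    ∀ i : ι, ∃ j : ι, i < j

/-- `f` is `A`-stable: the values `ρ_i(f)` are eventually constant. -/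
def IsStablePoly (ρ : ι → Polynomial K → WithTop Λ) (f : Polynomial K) : Prop :=
  ∃ i : ι, ∀ j : ι, i ≤ j → ρ j f = ρ i f

/-- `β` is the stable value `ρ_A(f)`. -/
def IsStableVal (ρ : ι → Polynomial K → WithTop Λ) (f : Polynomial K)
    (β : WithTop Λ) : Prop :=
  ∃ i : ι, ∀ j : ι, i ≤ j → ρ j f = β

open Classical in
/-- The stability function `ρ_A` (junk value `⊤` on unstable polynomials). -/
noncomputable def stableVal (ρ : ι → Polynomial K → WithTop Λ) (f : Polynomial K) :
    WithTop Λ :=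
  if h : ∃ β : WithTop Λ, IsStableVal ρ f β then h.choose else ⊤

/-- The family has stable degree `m`. -/
def HasStableDeg (ρ : ι → Polynomial K → WithTop Λ) (m : ℕ) : Prop :=
  ∃ i : ι, ∀ j : ι, i ≤ j → degOf (ρ j) = m

/-- A continuous family: a totally ordered family of eventually constant degree. -/
def IsContFamily (v : FieldVal K Λ) (ρ : ι → Polynomial K → WithTop Λ) : Prop :=
  IsTOFamily v ρ ∧ ∃ m : ℕ, HasStableDeg ρ m

/-- The stable group `Γ_C`: stable values of nonzero stable polynomials. -/
def stableSet (ρ : ι → Polynomial K → WithTop Λ) : Set Λ :=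
  {δ : Λ | ∃ f : Polynomial K, f ≠ 0 ∧ IsStableVal ρ f (δ : WithTop Λ)}

/-- A limit key polynomial: monic, unstable, of minimal degree among unstable polynomials. -/
def IsLimKeyPol (ρ : ι → Polynomial K → WithTop Λ) (φ : Polynomial K) : Prop :=
  φ.Monic ∧ ¬ IsStablePoly ρ φ ∧
    ∀ f : Polynomial K, ¬ IsStablePoly ρ f → φ.natDegree ≤ f.natDegree

/-- An essential continuous family: `m(C) < m_∞(C) < ∞`. -/
def IsEssential (v : FieldVal K Λ) (ρ : ι → Polynomial K → WithTop Λ) : Prop :=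
  IsTOFamily v ρ ∧
    ∃ m : ℕ, HasStableDeg ρ m ∧
      ∃ φ : Polynomial K, IsLimKeyPol ρ φ ∧ m < φ.natDegree

/-- The limit augmentation `[C; φ, γ]`, acting on `φ`-expansions by
`ν(Σ_s a_s φ^s) = min_s (ρ_C(a_s) + s γ)`. -/
noncomputable def limAugVal (ρ : ι → Polynomial K → WithTop Λ) (φ : Polynomial K)
    (γ : WithTop Λ) (f : Polynomial K) : WithTop Λ :=
  (Finset.range (f.natDegree + 1)).inf'
    (Finset.nonempty_range_iff.mpr (Nat.succ_ne_zero _))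
    fun s => stableVal ρ (expCoeff φ f s) + s • γ

/-- Equivalence of totally ordered families: mutual cofinality. -/
def FamEquiv {κ : Type*} [LinearOrder κ] (ρ : ι → Polynomial K → WithTop Λ)
    (σ : κ → Polynomial K → WithTop Λ) : Prop :=
  (∀ i : ι, ∃ j : κ, ρ i ≤ σ j) ∧ ∀ j : κ, ∃ i : ι, σ j ≤ ρ i

end Families

end MLV

open MLV

/-! Choose `γ ∈ Λ` with `γ ≤ μ(x)` and `γ ≤ ν(x)`. The Gauss valuation
`ρ(∑ a_s x^s) = min_s (v(a_s) + s γ)` lies in `T`, and `ρ ≤ μ` because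
`μ(a_s x^s) = v(a_s) + s μ(x) ≥ v(a_s) + s γ` and `μ` is ultrametric; likewise `ρ ≤ ν`. -/

namespace AddValuation

open Finset.HasAntidiagonal

variable {R : Type*} [CommRing R] {Λ : Type*} [AddCommGroup Λ] [LinearOrder Λ]
  [IsOrderedAddMonoid Λ] (w : AddValuation R (WithTop Λ)) (γ : Λ)

theorem map_sum_eq_of_lt {ι : Type*} [DecidableEq ι] {s : Finset ι} {f : ι → R} {j : ι}
    (hj : j ∈ s) (hf : ∀ i ∈ s \ {j}, w (f j) < w (f i)) :
    w (∑ i ∈ s, f i) = w (f j) :=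
  Valuation.map_sum_eq_of_lt w hj hf

theorem le_map_sum_add {ι : Type*} {s : Finset ι} {f : ι → R} {a : WithTop Λ} (d : Λ)
    (hf : ∀ i ∈ s, a ≤ w (f i) + d) : a ≤ w (∑ i ∈ s, f i) + d :=
  Finset.sum_induction f (fun x => a ≤ w x + d)
    (fun x y hx hy => (le_min hx hy).trans <| by
      rw [min_add_add_right]; gcongr; exact w.map_add x y)
    (by simp) hf

def gaussTerm (f : R[X]) (s : ℕ) : WithTop Λ :=
  w (f.coeff s) + ↑(s • γ)

noncomputable def gaussFun (f : R[X]) : WithTop Λ :=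
  f.support.inf (gaussTerm w γ f)

variable {w γ}

theorem gaussTerm_add_gaussTerm (f g : R[X]) (i j : ℕ) :
    gaussTerm w γ f i + gaussTerm w γ g j = w (f.coeff i * g.coeff j) + ↑((i + j) • γ) := by
  rw [gaussTerm, gaussTerm, add_add_add_comm, add_nsmul, WithTop.coe_add, w.map_mul]

theorem le_gaussFun_iff {f : R[X]} {c : WithTop Λ} :
    c ≤ gaussFun w γ f ↔ ∀ s, c ≤ gaussTerm w γ f s := by
  refine Finset.le_inf_iff.trans ⟨fun h s => ?_, fun h s _ => h s⟩
  by_cases hs : s ∈ f.support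
  · exact h s hs
  · rw [gaussTerm, notMem_support_iff.mp hs, w.map_zero, top_add]
    exact le_top

theorem gaussFun_le_gaussTerm (f : R[X]) (s : ℕ) : gaussFun w γ f ≤ gaussTerm w γ f s :=
  le_gaussFun_iff.mp le_rfl s

theorem exists_first_gaussTerm_le {f : R[X]} (hf : gaussFun w γ f ≠ ⊤) :
    ∃ i, gaussTerm w γ f i ≤ gaussFun w γ f ∧
      ∀ j < i, gaussFun w γ f < gaussTerm w γ f j := by
  classical
  have hex : ∃ i, gaussTerm w γ f i ≤ gaussFun w γ f := by
    obtain ⟨i, -, hi⟩ := Finset.exists_mem_eq_inf f.support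
      (Finset.nonempty_iff_ne_empty.mpr fun h => hf (by simp [gaussFun, h])) (gaussTerm w γ f)
    exact ⟨i, hi.ge⟩
  exact ⟨Nat.find hex, Nat.find_spec hex, fun j hj => not_le.mp (Nat.find_min hex hj)⟩

theorem min_gaussFun_le_gaussFun_add (f g : R[X]) :
    min (gaussFun w γ f) (gaussFun w γ g) ≤ gaussFun w γ (f + g) :=
  le_gaussFun_iff.mpr fun s => calc
    _ ≤ min (gaussTerm w γ f s) (gaussTerm w γ g s) :=
      min_le_min (gaussFun_le_gaussTerm f s) (gaussFun_le_gaussTerm g s)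
    _ ≤ gaussTerm w γ (f + g) s := by
      rw [gaussTerm, gaussTerm, gaussTerm, coeff_add, min_add_add_right]
      gcongr; exact w.map_add _ _

theorem gaussFun_add_gaussFun_le_gaussFun_mul (f g : R[X]) :
    gaussFun w γ f + gaussFun w γ g ≤ gaussFun w γ (f * g) :=
  le_gaussFun_iff.mpr fun k => by
    rw [gaussTerm, coeff_mul]
    refine w.le_map_sum_add _ fun p hp => ?_
    rw [← (mem_antidiagonal.mp hp), ← gaussTerm_add_gaussTerm]
    exact add_le_add (gaussFun_le_gaussTerm f _) (gaussFun_le_gaussTerm g _)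

/-- With `i`, `j` the first indices attaining the minima for `f` and `g`, the product
`f_i g_j` has strictly smaller value than every other summand of the `(i + j)`-th coefficient
of `f * g`, so it determines the value of that coefficient. -/
theorem gaussFun_mul_le (f g : R[X]) :
    gaussFun w γ (f * g) ≤ gaussFun w γ f + gaussFun w γ g := by
  classical
  by_cases hf : gaussFun w γ f = ⊤
  · rw [hf, top_add]; exact le_top
  by_cases hg : gaussFun w γ g = ⊤
  · rw [hg, add_top]; exact le_top
  obtain ⟨i, hi, hi_first⟩ := exists_first_gaussTerm_le hf
  obtain ⟨j, hj, hj_first⟩ := exists_first_gaussTerm_le hg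
  have hdom : ∀ p ∈ antidiagonal (i + j) \ {(i, j)},
      w (f.coeff i * g.coeff j) < w (f.coeff p.1 * g.coeff p.2) := by
    intro p hp
    obtain ⟨hp_sum, hp_ne⟩ := Finset.mem_sdiff.mp hp
    rw [mem_antidiagonal] at hp_sum
    have hlt : gaussTerm w γ f i + gaussTerm w γ g j <
        gaussTerm w γ f p.1 + gaussTerm w γ g p.2 := by
      rcases lt_or_ge p.1 i with h1 | h1
      · exact WithTop.add_lt_add_of_lt_of_le (ne_top_of_le_ne_top hg hj)
          (hi.trans_lt (hi_first _ h1)) (hj.trans (gaussFun_le_gaussTerm g _))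
      · have h2 : p.2 < j := by
          have : p.1 = i → p.2 ≠ j := by simpa [Prod.ext_iff] using hp_ne
          omega
        exact WithTop.add_lt_add_of_le_of_lt (ne_top_of_le_ne_top hf hi)
          (hi.trans (gaussFun_le_gaussTerm f _)) (hj.trans_lt (hj_first _ h2))
    rwa [gaussTerm_add_gaussTerm, gaussTerm_add_gaussTerm, hp_sum,
      WithTop.add_lt_add_iff_right WithTop.coe_ne_top] at hlt
  calc gaussFun w γ (f * g) ≤ gaussTerm w γ (f * g) (i + j) := gaussFun_le_gaussTerm _ _
    _ = gaussTerm w γ f i + gaussTerm w γ g j := by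
      rw [gaussTerm_add_gaussTerm, gaussTerm, coeff_mul,
        w.map_sum_eq_of_lt (mem_antidiagonal.mpr rfl) hdom]
    _ ≤ gaussFun w γ f + gaussFun w γ g := add_le_add hi hj

theorem gaussFun_C (a : R) : gaussFun w γ (C a) = w a := by
  refine le_antisymm ((gaussFun_le_gaussTerm (C a) 0).trans (by simp [gaussTerm])) ?_
  refine le_gaussFun_iff.mpr fun s => ?_
  rcases eq_or_ne s 0 with rfl | hs
  · simp [gaussTerm]
  · simp [gaussTerm, coeff_C_of_ne_zero hs]

variable (w γ)

/-- When `w` comes from `v`, this is the depth-zero valuation `ω_{0,γ} = omegaVal v 0 γ`. -/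
noncomputable def gauss : AddValuation R[X] (WithTop Λ) :=
  AddValuation.of (gaussFun w γ) (by simp [gaussFun])
    (by simpa using gaussFun_C (w := w) (γ := γ) 1)
    min_gaussFun_le_gaussFun_add
    fun f g => le_antisymm (gaussFun_mul_le f g) (gaussFun_add_gaussFun_le_gaussFun_mul f g)

variable {w γ}

theorem gauss_C (a : R) : w.gauss γ (C a) = w a :=
  gaussFun_C a

theorem gauss_le {μ : AddValuation R[X] (WithTop Λ)} (hC : ∀ a, w a ≤ μ (C a))
    (hX : (γ : WithTop Λ) ≤ μ X) (f : R[X]) : w.gauss γ f ≤ μ f := by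
  conv_rhs => rw [f.as_sum_support_C_mul_X_pow]
  refine μ.map_le_sum fun s _ => ?_
  rw [μ.map_mul, μ.map_pow]
  refine (gaussFun_le_gaussTerm f s).trans ?_
  rw [gaussTerm, WithTop.coe_nsmul]
  gcongr
  exact hC _

end AddValuation

namespace MLV

variable {K : Type*} [Field K] {Λ : Type*} [AddCommGroup Λ] [LinearOrder Λ] [IsOrderedAddMonoid Λ]
  {v : FieldVal K Λ}

def FieldVal.toAddValuation (v : FieldVal K Λ) : AddValuation K (WithTop Λ) :=
  AddValuation.of v.v v.map_zero' v.map_one' v.map_add' v.map_mul'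

theorem isValT_gauss (γ : Λ) : IsValT v (v.toAddValuation.gauss γ) :=
  ⟨AddValuation.map_one _, AddValuation.map_zero _, AddValuation.map_mul _,
    AddValuation.map_add _, AddValuation.gauss_C⟩

theorem IsValT.gauss_le {μ : K[X] → WithTop Λ} (hμ : IsValT v μ) {γ : Λ}
    (hγ : (γ : WithTop Λ) ≤ μ X) : ⇑(v.toAddValuation.gauss γ) ≤ μ := by
  obtain ⟨h1, h0, hmul, hadd, hC⟩ := hμ
  exact AddValuation.gauss_le (μ := AddValuation.of μ h0 h1 hadd hmul) (fun a => (hC a).ge) hγ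

end MLV

/-- Any two valuations in `T` have a common lower bound in `T`. -/
theorem statement_16 {K : Type*} [Field K] {Λ : Type*} [AddCommGroup Λ] [LinearOrder Λ] [IsOrderedAddMonoid Λ]
    (v : FieldVal K Λ) (μ ν : Polynomial K → WithTop Λ)
    (hμ : IsValT v μ) (hν : IsValT v ν) :
    ∃ ρ : Polynomial K → WithTop Λ, IsValT v ρ ∧ ρ ≤ μ ∧ ρ ≤ ν := by
  obtain ⟨γ, hγ⟩ : ∃ γ : Λ, (γ : WithTop Λ) ≤ min (μ X) (ν X) :=
    ⟨_, WithTop.coe_untopD_le _ 0⟩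
  exact ⟨_, isValT_gauss γ, hμ.gauss_le (hγ.trans (min_le_left _ _)),
    hν.gauss_le (hγ.trans (min_le_right _ _))⟩
end

section
/- For every pair of valuations μ, ν ∈ T, the set of common lower bounds {ρ ∈ T : ρ ≤ μ and ρ ≤ ν} is nonempty and has a greatest element μ∧ν (the greatest common lower node of μ and ν in T). -/
open Polynomial

/-!
If `μ ≠ ν`, let `φ` be a monic polynomial of least degree with `μ φ ≠ ν φ`, say `μ φ < ν φ`, so
that `μ` and `ν` agree below `deg φ`. The candidate for `μ ∧ ν` is the augmentation
`[μ; φ, μ φ] : Σ a_s φ^s ↦ min_s (μ a_s + s μ φ)`. It lies below `μ` and `ν` by the ultrametric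
inequality, and it is multiplicative because reducing a product of `φ`-reduced polynomials
modulo `φ` loses no `μ`-value: otherwise `ν`, which values the quotient term higher, would
disagree with `μ` on the product.

Maximality rests on one estimate: a valuation `ρ ≤ τ` that agrees with `τ` below `deg ψ` and
satisfies `ρ ψ < τ ψ` is bounded by the augmentation of `τ` at `(ψ, ρ ψ)`. A common lower bound
`ρ` either agrees with `μ` below `deg φ`, and the estimate applies to `(ρ, ν, φ)`, or it first
departs from `μ` at a monic `ψ` of smaller degree, and the estimate applies to `(ρ, μ, ψ)`; in
both cases the bound lies below `[μ; φ, μ φ]`.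
-/

namespace Polynomial

variable {R : Type*} [Ring R] {p q : R[X]}

theorem divByMonic_add (hq : q.Monic) (f g : R[X]) : (f + g) /ₘ q = f /ₘ q + g /ₘ q := by
  nontriviality R
  refine (div_modByMonic_unique _ (f %ₘ q + g %ₘ q) hq ⟨?_, ?_⟩).1
  · rw [mul_add, add_add_add_comm, modByMonic_add_div, modByMonic_add_div]
  · exact (degree_add_le _ _).trans_lt
      (max_lt (degree_modByMonic_lt _ hq) (degree_modByMonic_lt _ hq))

theorem divByMonic_neg (hq : q.Monic) (f : R[X]) : (-f) /ₘ q = -(f /ₘ q) :=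
  eq_neg_of_add_eq_zero_left (by rw [← divByMonic_add hq, neg_add_cancel, zero_divByMonic])

theorem divByMonic_mul (hp : p.Monic) (hq : q.Monic) (f : R[X]) :
    f /ₘ (p * q) = f /ₘ p /ₘ q := by
  nontriviality R
  refine (div_modByMonic_unique _ (f %ₘ p + p * (f /ₘ p %ₘ q)) (hp.mul hq) ⟨?_, ?_⟩).1
  · rw [add_assoc, mul_assoc, ← mul_add, modByMonic_add_div _ q, modByMonic_add_div _ p]
  · rw [hq.degree_mul]
    refine (degree_add_le _ _).trans_lt (max_lt ?_ ?_)
    · exact (degree_modByMonic_lt _ hp).trans_le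
        (le_add_of_nonneg_right (zero_le_degree_iff.2 hq.ne_zero))
    · rw [hp.degree_mul_comm, hp.degree_mul, add_comm]
      exact WithBot.add_lt_add_left (degree_eq_bot.not.2 hp.ne_zero) (degree_modByMonic_lt _ hq)

end Polynomial

theorem WithTop.nsmul_ne_top {α : Type*} [AddMonoid α] {a : WithTop α} (ha : a ≠ ⊤) (n : ℕ) :
    n • a ≠ ⊤ := by
  lift a to α using ha
  exact WithTop.coe_ne_top (a := n • a)

namespace MLV

variable {K : Type*} [Field K] {φ : K[X]}

@[simp]
theorem expCoeff_zero_left (s : ℕ) : expCoeff φ 0 s = 0 := by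
  simp [expCoeff]

theorem expCoeff_zero_right (f : K[X]) : expCoeff φ f 0 = f %ₘ φ := by
  simp [expCoeff]

theorem expCoeff_add (hφ : φ.Monic) (f g : K[X]) (s : ℕ) :
    expCoeff φ (f + g) s = expCoeff φ f s + expCoeff φ g s := by
  simp only [expCoeff, divByMonic_add (hφ.pow s), add_modByMonic]

theorem expCoeff_neg (hφ : φ.Monic) (f : K[X]) (s : ℕ) :
    expCoeff φ (-f) s = -expCoeff φ f s := by
  simp only [expCoeff, divByMonic_neg (hφ.pow s), neg_modByMonic]

theorem expCoeff_sub (hφ : φ.Monic) (f g : K[X]) (s : ℕ) :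
    expCoeff φ (f - g) s = expCoeff φ f s - expCoeff φ g s := by
  rw [sub_eq_add_neg, expCoeff_add hφ, expCoeff_neg hφ, ← sub_eq_add_neg]

theorem expCoeff_succ (hφ : φ.Monic) (f : K[X]) (s : ℕ) :
    expCoeff φ f (s + 1) = expCoeff φ (f /ₘ φ) s := by
  rw [expCoeff, expCoeff, pow_succ', divByMonic_mul hφ (hφ.pow s)]

theorem expCoeff_pow_mul (hφ : φ.Monic) (n : ℕ) (h : K[X]) (s : ℕ) :
    expCoeff φ (φ ^ n * h) (n + s) = expCoeff φ h s := by
  rw [expCoeff, expCoeff, pow_add, divByMonic_mul (hφ.pow n) (hφ.pow s),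
    mul_divByMonic_cancel_left _ (hφ.pow n)]

theorem expCoeff_pow_mul_of_lt (hφ : φ.Monic) {n s : ℕ} (hs : s < n) (h : K[X]) :
    expCoeff φ (φ ^ n * h) s = 0 := by
  obtain ⟨k, rfl⟩ : ∃ k, n = s + (k + 1) := ⟨n - s - 1, by omega⟩
  rw [expCoeff, pow_add, mul_assoc, mul_divByMonic_cancel_left _ (hφ.pow s),
    modByMonic_eq_zero_iff_dvd hφ]
  exact dvd_mul_of_dvd_left (dvd_pow_self φ k.succ_ne_zero) h

theorem expCoeff_eq_zero_of_degree_lt (hφ : φ.Monic) {f : K[X]} {s : ℕ}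
    (h : f.degree < (φ ^ s).degree) : expCoeff φ f s = 0 := by
  rw [expCoeff, (divByMonic_eq_zero_iff (hφ.pow s)).2 h, zero_modByMonic]

theorem expCoeff_eq_zero_of_natDegree_lt (hφ : φ.Monic) {f : K[X]} {s : ℕ}
    (h : f.natDegree < s * φ.natDegree) : expCoeff φ f s = 0 :=
  expCoeff_eq_zero_of_degree_lt hφ (degree_lt_degree (by rwa [hφ.natDegree_pow]))

theorem expCoeff_of_natDegree_lt (hφ : φ.Monic) {f : K[X]} (h : f.natDegree < φ.natDegree) :
    expCoeff φ f 0 = f := by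
  rw [expCoeff_zero_right, modByMonic_eq_self_iff hφ]
  exact degree_lt_degree h

theorem natDegree_expCoeff_lt (hφ : φ.Monic) (hd : 0 < φ.natDegree) (f : K[X]) (s : ℕ) :
    (expCoeff φ f s).natDegree < φ.natDegree :=
  natDegree_modByMonic_lt _ hφ fun h => by simp [h] at hd

theorem expCoeff_modByMonic_pow_of_lt (hφ : φ.Monic) {n s : ℕ} (hs : s < n) (f : K[X]) :
    expCoeff φ (f %ₘ φ ^ n) s = expCoeff φ f s := by
  rw [modByMonic_eq_sub_mul_div, expCoeff_sub hφ, expCoeff_pow_mul_of_lt hφ hs, sub_zero]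

theorem expCoeff_modByMonic_pow_of_le (hφ : φ.Monic) {n s : ℕ} (hs : n ≤ s) (f : K[X]) :
    expCoeff φ (f %ₘ φ ^ n) s = 0 :=
  expCoeff_eq_zero_of_degree_lt hφ <| (degree_modByMonic_lt _ (hφ.pow n)).trans_le <|
    degree_le_of_dvd (pow_dvd_pow φ hs) (hφ.pow s).ne_zero

theorem sum_expCoeff_mul_pow (hφ : φ.Monic) (hd : 0 < φ.natDegree) (f : K[X]) :
    ∑ s ∈ Finset.range (f.natDegree + 1), expCoeff φ f s * φ ^ s = f := by
  suffices ∀ N (f : K[X]), f.natDegree ≤ N →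
      ∑ s ∈ Finset.range (N + 1), expCoeff φ f s * φ ^ s = f from this _ f le_rfl
  intro N
  induction N with
  | zero =>
    intro f hf
    rw [Finset.sum_range_one, pow_zero, mul_one, expCoeff_of_natDegree_lt hφ (by omega)]
  | succ N ih =>
    intro f hf
    have hdiv : (f /ₘ φ).natDegree ≤ N := by rw [natDegree_divByMonic _ hφ]; omega
    rw [Finset.sum_range_succ', pow_zero, mul_one, expCoeff_zero_right]
    simp_rw [expCoeff_succ hφ, pow_succ', mul_left_comm _ φ, ← Finset.mul_sum, ih _ hdiv]
    exact add_comm _ _ |>.trans (modByMonic_add_div f φ)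

variable {Λ : Type*} [AddCommGroup Λ] [LinearOrder Λ] {γ : WithTop Λ}

theorem le_augVal {μ : K[X] → WithTop Λ} {f : K[X]} {m : WithTop Λ}
    (h : ∀ s, m ≤ μ (expCoeff φ f s) + s • γ) : m ≤ augVal μ φ γ f :=
  Finset.le_inf' _ _ fun s _ => h s

theorem lt_augVal {μ : K[X] → WithTop Λ} {f : K[X]} {m : WithTop Λ}
    (h : ∀ s, m < μ (expCoeff φ f s) + s • γ) : m < augVal μ φ γ f :=
  (Finset.lt_inf'_iff _).2 fun s _ => h s

theorem exists_augVal_eq (μ : K[X] → WithTop Λ) (f : K[X]) :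
    ∃ s, augVal μ φ γ f = μ (expCoeff φ f s) + s • γ :=
  let ⟨s, _, h⟩ := Finset.exists_mem_eq_inf' _ _
  ⟨s, h⟩

theorem augVal_congr {μ ν : K[X] → WithTop Λ} (hφ : φ.Monic) (hd : 0 < φ.natDegree)
    (h : ∀ g : K[X], g.natDegree < φ.natDegree → μ g = ν g) (f : K[X]) :
    augVal μ φ γ f = augVal ν φ γ f :=
  Finset.inf'_congr _ rfl fun s _ => by rw [h _ (natDegree_expCoeff_lt hφ hd f s)]

variable [IsOrderedAddMonoid Λ]

section Truncation

variable {μ : AddValuation K[X] (WithTop Λ)}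

theorem augVal_le (hφ : φ.Monic) (hd : 0 < φ.natDegree) (f : K[X]) (s : ℕ) :
    augVal μ φ γ f ≤ μ (expCoeff φ f s) + s • γ := by
  rcases le_or_gt s f.natDegree with hs | hs
  · exact Finset.inf'_le _ (Finset.mem_range_succ_iff.2 hs)
  · rw [expCoeff_eq_zero_of_natDegree_lt hφ (hs.trans_le (Nat.le_mul_of_pos_right s hd)),
      μ.map_zero, top_add]
    exact le_top

theorem augVal_zero : augVal μ φ γ 0 = ⊤ :=
  top_le_iff.1 (le_augVal fun s => by simp)

theorem augVal_of_natDegree_lt (hφ : φ.Monic) {f : K[X]} (h : f.natDegree < φ.natDegree) :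
    augVal μ φ γ f = μ f := by
  refine le_antisymm ?_ (le_augVal fun s => ?_)
  · simpa [expCoeff_of_natDegree_lt hφ h] using augVal_le (μ := μ) (γ := γ) hφ (by omega) f 0
  · rcases s with _ | s
    · simp [expCoeff_of_natDegree_lt hφ h]
    · rw [expCoeff_eq_zero_of_natDegree_lt hφ (h.trans_le (Nat.le_mul_of_pos_left _ s.succ_pos)),
        μ.map_zero, top_add]
      exact le_top

theorem augVal_mono (hφ : φ.Monic) (hd : 0 < φ.natDegree) {δ : WithTop Λ} (h : γ ≤ δ)
    (f : K[X]) : augVal μ φ γ f ≤ augVal μ φ δ f :=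
  le_augVal fun s => (augVal_le hφ hd f s).trans (by gcongr)

theorem augVal_le_self (hφ : φ.Monic) (hd : 0 < φ.natDegree) (hγ : γ ≤ μ φ) (f : K[X]) :
    augVal μ φ γ f ≤ μ f := by
  conv_rhs => rw [← sum_expCoeff_mul_pow hφ hd f]
  refine μ.map_le_sum fun s _ => ?_
  rw [μ.map_mul, μ.map_pow]
  exact (augVal_le hφ hd f s).trans (by gcongr)

theorem min_le_augVal_add (hφ : φ.Monic) (hd : 0 < φ.natDegree) (f g : K[X]) :
    min (augVal μ φ γ f) (augVal μ φ γ g) ≤ augVal μ φ γ (f + g) :=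
  le_augVal fun s => calc
    _ ≤ min (μ (expCoeff φ f s) + s • γ) (μ (expCoeff φ g s) + s • γ) :=
      min_le_min (augVal_le hφ hd f s) (augVal_le hφ hd g s)
    _ = min (μ (expCoeff φ f s)) (μ (expCoeff φ g s)) + s • γ := min_add_add_right _ _ _
    _ ≤ μ (expCoeff φ (f + g) s) + s • γ := by rw [expCoeff_add hφ]; gcongr; exact μ.map_add _ _

theorem augVal_neg (hφ : φ.Monic) (hd : 0 < φ.natDegree) (f : K[X]) :
    augVal μ φ γ (-f) = augVal μ φ γ f := by
  have key (g : K[X]) : augVal μ φ γ g ≤ augVal μ φ γ (-g) :=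
    le_augVal fun s => by rw [expCoeff_neg hφ, μ.map_neg]; exact augVal_le hφ hd g s
  exact le_antisymm (by simpa using key (-f)) (key f)

theorem min_le_augVal_sub (hφ : φ.Monic) (hd : 0 < φ.natDegree) (f g : K[X]) :
    min (augVal μ φ γ f) (augVal μ φ γ g) ≤ augVal μ φ γ (f - g) := by
  rw [sub_eq_add_neg, ← augVal_neg hφ hd g]
  exact min_le_augVal_add hφ hd f (-g)

theorem le_augVal_sum (hφ : φ.Monic) (hd : 0 < φ.natDegree) {ι : Type*} {s : Finset ι}
    {F : ι → K[X]} {m : WithTop Λ} (h : ∀ i ∈ s, m ≤ augVal μ φ γ (F i)) :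
    m ≤ augVal μ φ γ (∑ i ∈ s, F i) := by
  classical
  induction s using Finset.induction_on with
  | empty => simp [augVal_zero]
  | insert i s hi ih =>
    rw [Finset.sum_insert hi]
    exact (le_min (h i (Finset.mem_insert_self i s))
      (ih fun j hj => h j (Finset.mem_insert_of_mem hj))).trans (min_le_augVal_add hφ hd _ _)

theorem augVal_pow_mul (hφ : φ.Monic) (hd : 0 < φ.natDegree) (n : ℕ) (f : K[X]) :
    augVal μ φ γ (φ ^ n * f) = n • γ + augVal μ φ γ f := by
  refine le_antisymm ?_ (le_augVal fun s => ?_)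
  · obtain ⟨s, hs⟩ := exists_augVal_eq (φ := φ) (γ := γ) μ f
    calc augVal μ φ γ (φ ^ n * f) ≤ μ (expCoeff φ (φ ^ n * f) (n + s)) + (n + s) • γ :=
          augVal_le hφ hd _ _
      _ = n • γ + augVal μ φ γ f := by rw [expCoeff_pow_mul hφ, hs, add_nsmul, add_left_comm]
  · rcases lt_or_ge s n with hs | hs
    · rw [expCoeff_pow_mul_of_lt hφ hs, μ.map_zero, top_add]
      exact le_top
    · obtain ⟨k, rfl⟩ := Nat.exists_eq_add_of_le hs
      rw [expCoeff_pow_mul hφ, add_nsmul, add_left_comm]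
      gcongr
      exact augVal_le hφ hd f k

theorem exists_first_augVal_eq (hφ : φ.Monic) (hd : 0 < φ.natDegree) (f : K[X]) :
    ∃ n, augVal μ φ γ f = μ (expCoeff φ f n) + n • γ ∧
      ∀ k < n, augVal μ φ γ f < μ (expCoeff φ f k) + k • γ := by
  classical
  have hex := exists_augVal_eq (φ := φ) (γ := γ) μ f
  exact ⟨Nat.find hex, Nat.find_spec hex, fun k hk =>
    (augVal_le hφ hd f k).lt_of_ne (Nat.find_min hex hk)⟩

theorem augVal_lt_augVal_modByMonic_pow (hφ : φ.Monic) {f : K[X]} {n : ℕ}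
    (hf : augVal μ φ γ f ≠ ⊤) (hn : ∀ k < n, augVal μ φ γ f < μ (expCoeff φ f k) + k • γ) :
    augVal μ φ γ f < augVal μ φ γ (f %ₘ φ ^ n) :=
  lt_augVal fun k => by
    rcases lt_or_ge k n with hk | hk
    · rw [expCoeff_modByMonic_pow_of_lt hφ hk]
      exact hn k hk
    · rw [expCoeff_modByMonic_pow_of_le hφ hk, μ.map_zero, top_add]
      exact hf.lt_top

end Truncation

section Augmentation

/-- The condition under which `augVal μ φ γ` is multiplicative. -/
def IsAugmentable (μ : K[X] → WithTop Λ) (φ : K[X]) (γ : WithTop Λ) : Prop :=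
  ∀ a b : K[X], a.natDegree < φ.natDegree → b.natDegree < φ.natDegree →
    μ (a * b %ₘ φ) = μ a + μ b ∧ μ a + μ b ≤ μ (a * b /ₘ φ) + γ

variable {μ : AddValuation K[X] (WithTop Λ)}

theorem add_le_augVal_mul_of_natDegree_lt (hφ : φ.Monic) (hd : 0 < φ.natDegree)
    (hA : IsAugmentable μ φ γ) {a b : K[X]} (ha : a.natDegree < φ.natDegree)
    (hb : b.natDegree < φ.natDegree) : μ a + μ b ≤ augVal μ φ γ (a * b) := by
  have hq : (a * b /ₘ φ).natDegree < φ.natDegree := by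
    rw [natDegree_divByMonic _ hφ]
    have := natDegree_mul_le (p := a) (q := b)
    omega
  have hφq := augVal_pow_mul (μ := μ) (γ := γ) hφ hd 1 (a * b /ₘ φ)
  rw [pow_one, one_nsmul, augVal_of_natDegree_lt hφ hq, add_comm] at hφq
  rw [← modByMonic_add_div (a * b) φ]
  refine le_trans (le_min ?_ ?_) (min_le_augVal_add hφ hd _ _)
  · rw [augVal_of_natDegree_lt hφ (natDegree_modByMonic_lt _ hφ fun h => by simp [h] at hd),
      (hA a b ha hb).1]
  · rw [hφq]
    exact (hA a b ha hb).2

theorem add_le_augVal_mul (hφ : φ.Monic) (hd : 0 < φ.natDegree) (hA : IsAugmentable μ φ γ)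
    (f g : K[X]) : augVal μ φ γ f + augVal μ φ γ g ≤ augVal μ φ γ (f * g) := by
  conv_rhs => rw [← sum_expCoeff_mul_pow hφ hd f, ← sum_expCoeff_mul_pow hφ hd g,
    Finset.sum_mul_sum]
  refine le_augVal_sum hφ hd fun s _ => le_augVal_sum hφ hd fun t _ => ?_
  rw [show expCoeff φ f s * φ ^ s * (expCoeff φ g t * φ ^ t)
      = φ ^ (s + t) * (expCoeff φ f s * expCoeff φ g t) by ring, augVal_pow_mul hφ hd]
  calc augVal μ φ γ f + augVal μ φ γ g
      ≤ μ (expCoeff φ f s) + s • γ + (μ (expCoeff φ g t) + t • γ) :=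
        add_le_add (augVal_le hφ hd f s) (augVal_le hφ hd g t)
    _ = (s + t) • γ + (μ (expCoeff φ f s) + μ (expCoeff φ g t)) := by rw [add_nsmul]; abel
    _ ≤ _ := by
      gcongr
      exact add_le_augVal_mul_of_natDegree_lt hφ hd hA (natDegree_expCoeff_lt hφ hd f s)
        (natDegree_expCoeff_lt hφ hd g t)

/-- Split `f = (f %ₘ φ ^ s) + φ ^ s * F` and `g = (g %ₘ φ ^ t) + φ ^ t * G` at the first indices
realising `augVal f` and `augVal g`: all cross terms lie strictly above `augVal f + augVal g`,
while the `(s + t)`-th coefficient of `φ ^ (s + t) * F * G` is `a_s b_t %ₘ φ`. -/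
theorem augVal_mul_le (hφ : φ.Monic) (hd : 0 < φ.natDegree) (hA : IsAugmentable μ φ γ)
    (f g : K[X]) : augVal μ φ γ (f * g) ≤ augVal μ φ γ f + augVal μ φ γ g := by
  by_cases hf : augVal μ φ γ f = ⊤
  · simp [hf]
  by_cases hg : augVal μ φ γ g = ⊤
  · simp [hg]
  obtain ⟨s, hs, hs_min⟩ := exists_first_augVal_eq (μ := μ) (γ := γ) hφ hd f
  obtain ⟨t, ht, ht_min⟩ := exists_first_augVal_eq (μ := μ) (γ := γ) hφ hd g
  set F := f /ₘ φ ^ s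
  set G := g /ₘ φ ^ t
  have hf_split : f %ₘ φ ^ s + φ ^ s * F = f := modByMonic_add_div f _
  have hg_split : g %ₘ φ ^ t + φ ^ t * G = g := modByMonic_add_div g _
  have hLf := augVal_lt_augVal_modByMonic_pow hφ hf hs_min
  have hLg := augVal_lt_augVal_modByMonic_pow hφ hg ht_min
  have hPf : augVal μ φ γ f ≤ augVal μ φ γ (φ ^ s * F) := by
    rw [eq_sub_of_add_eq' hf_split, ← min_eq_left hLf.le]
    exact min_le_augVal_sub hφ hd _ _
  have hlead : augVal μ φ γ (φ ^ s * F * (φ ^ t * G)) ≤ augVal μ φ γ f + augVal μ φ γ g := by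
    have hcoeff := expCoeff_pow_mul hφ (s + t) (F * G) 0
    rw [add_zero, expCoeff_zero_right, mul_modByMonic] at hcoeff
    calc augVal μ φ γ (φ ^ s * F * (φ ^ t * G)) = augVal μ φ γ (φ ^ (s + t) * (F * G)) := by
          ring_nf
      _ ≤ μ (F %ₘ φ * (G %ₘ φ) %ₘ φ) + (s + t) • γ := by
          rw [← hcoeff]
          exact augVal_le hφ hd _ _
      _ = augVal μ φ γ f + augVal μ φ γ g := by
          rw [show F %ₘ φ = expCoeff φ f s from rfl, show G %ₘ φ = expCoeff φ g t from rfl,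
            (hA _ _ (natDegree_expCoeff_lt hφ hd f s) (natDegree_expCoeff_lt hφ hd g t)).1,
            hs, ht, add_nsmul]
          exact add_add_add_comm _ _ _ _
  have hrest : augVal μ φ γ f + augVal μ φ γ g
      < augVal μ φ γ (f %ₘ φ ^ s * g + φ ^ s * F * (g %ₘ φ ^ t)) := by
    refine lt_of_lt_of_le (lt_min ?_ ?_) (min_le_augVal_add hφ hd _ _)
    · exact (WithTop.add_lt_add_right hg hLf).trans_le (add_le_augVal_mul hφ hd hA _ _)
    · exact (WithTop.add_lt_add_of_le_of_lt hf hPf hLg).trans_le (add_le_augVal_mul hφ hd hA _ _)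
  by_contra! hlt
  have hsplit : φ ^ s * F * (φ ^ t * G)
      = f * g - (f %ₘ φ ^ s * g + φ ^ s * F * (g %ₘ φ ^ t)) := by
    linear_combination g * hf_split + (φ ^ s * F) * hg_split
  have := (lt_min hlt hrest).trans_le (min_le_augVal_sub hφ hd _ _)
  rw [← hsplit] at this
  exact (lt_irrefl _ (this.trans_le hlead))

theorem augVal_mul (hφ : φ.Monic) (hd : 0 < φ.natDegree) (hA : IsAugmentable μ φ γ)
    (f g : K[X]) : augVal μ φ γ (f * g) = augVal μ φ γ f + augVal μ φ γ g :=
  le_antisymm (augVal_mul_le hφ hd hA f g) (add_le_augVal_mul hφ hd hA f g)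

noncomputable def augValuation (hφ : φ.Monic) (hd : 0 < φ.natDegree) (hA : IsAugmentable μ φ γ) :
    AddValuation K[X] (WithTop Λ) :=
  AddValuation.of (augVal μ φ γ) augVal_zero
    (by rw [augVal_of_natDegree_lt hφ (by simpa using hd), μ.map_one])
    (min_le_augVal_add hφ hd) (augVal_mul hφ hd hA)

@[simp]
theorem augValuation_apply (hφ : φ.Monic) (hd : 0 < φ.natDegree) (hA : IsAugmentable μ φ γ)
    (f : K[X]) : augValuation hφ hd hA f = augVal μ φ γ f :=
  rfl

end Augmentation

section LowerBounds

theorem natDegree_pos_of_apply_ne {μ ν : AddValuation K[X] (WithTop Λ)} (hφ : φ.Monic)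
    (hne : μ φ ≠ ν φ) : 0 < φ.natDegree := by
  by_contra! h
  rw [hφ.natDegree_eq_zero.1 (by omega), μ.map_one, ν.map_one] at hne
  exact hne rfl

theorem exists_monic_min_natDegree_ne {μ ν : AddValuation K[X] (WithTop Λ)}
    (hC : ∀ a : K, μ (C a) = ν (C a)) {f : K[X]} (hf : μ f ≠ ν f) :
    ∃ φ : K[X], φ.Monic ∧ φ.natDegree ≤ f.natDegree ∧ μ φ ≠ ν φ ∧
      ∀ g : K[X], g.natDegree < φ.natDegree → μ g = ν g := by
  classical
  have hex : ∃ n, ∃ g : K[X], g.natDegree = n ∧ μ g ≠ ν g := ⟨_, f, rfl, hf⟩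
  obtain ⟨g, hgn, hg⟩ := Nat.find_spec hex
  have hg0 : g ≠ 0 := by
    rintro rfl
    simp at hg
  have hc : g.leadingCoeff ≠ 0 := leadingCoeff_ne_zero.2 hg0
  have hφg : g * C g.leadingCoeff⁻¹ * C g.leadingCoeff = g := by
    rw [mul_assoc, ← C_mul, inv_mul_cancel₀ hc, C_1, mul_one]
  have hdeg : (g * C g.leadingCoeff⁻¹).natDegree = g.natDegree :=
    natDegree_mul_C (inv_ne_zero hc)
  refine ⟨_, monic_mul_leadingCoeff_inv hg0, ?_, fun h => hg ?_, fun h hh => ?_⟩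
  · rw [hdeg, hgn]
    exact Nat.find_min' hex ⟨f, rfl, hf⟩
  · rw [← hφg, μ.map_mul, ν.map_mul, h, hC]
  · by_contra hne
    exact Nat.find_min hex (hgn ▸ hdeg ▸ hh) ⟨h, rfl, hne⟩

theorem isAugmentable_of_lt {μ ν : AddValuation K[X] (WithTop Λ)} (hφ : φ.Monic)
    (hagree : ∀ g : K[X], g.natDegree < φ.natDegree → μ g = ν g) (hlt : μ φ < ν φ) :
    IsAugmentable μ φ (μ φ) := by
  intro a b ha hb
  have hd : 0 < φ.natDegree := by omega
  set r := a * b %ₘ φ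
  set q := a * b /ₘ φ
  have hr : r.natDegree < φ.natDegree := natDegree_modByMonic_lt _ hφ fun h => by simp [h] at hd
  have hq : q.natDegree < φ.natDegree := by
    rw [natDegree_divByMonic _ hφ]
    have := natDegree_mul_le (p := a) (q := b)
    omega
  have hab : r + φ * q = a * b := modByMonic_add_div _ _
  have hνab : ν (a * b) = μ (a * b) := by
    rw [ν.map_mul, μ.map_mul, hagree a ha, hagree b hb]
  -- `ν` agrees with `μ` on `a * b` and on `r`, but values the quotient term higher
  have hφq : μ (φ * q) < ν (φ * q) ∨ ν (φ * q) = ⊤ := by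
    rw [μ.map_mul, ν.map_mul, ← hagree q hq]
    by_cases hμq : μ q = ⊤
    · simp [hμq]
    · exact Or.inl (WithTop.add_lt_add_right hμq hlt)
  have hle : μ r ≤ μ (φ * q) := by
    by_contra! h
    have hμab : μ (a * b) = μ (φ * q) := by rw [← hab, add_comm, μ.map_add_eq_of_lt_left h]
    have hν_gt : μ (φ * q) < ν (a * b) := by
      rw [← hab]
      refine (lt_min ?_ ?_).trans_le (ν.map_add _ _)
      · rwa [← hagree r hr]
      · rcases hφq with h' | h'
        · exact h'
        · exact h'.symm ▸ (h.trans_le le_top)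
    rw [hνab, hμab] at hν_gt
    exact lt_irrefl _ hν_gt
  have hνr : ν (a * b) = ν r := by
    rw [← hab]
    rcases hφq with h | h
    · exact ν.map_add_eq_of_lt_left (by rw [← hagree r hr]; exact hle.trans_lt h)
    · exact ν.map_add_supp r ((ν.mem_supp_iff _).2 h)
  have hrem : μ r = μ a + μ b := by rw [hagree r hr, ← hνr, hνab, μ.map_mul]
  refine ⟨hrem, ?_⟩
  rw [← hrem, add_comm, ← μ.map_mul]
  exact hle

theorem le_augVal_of_lt {ρ τ : AddValuation K[X] (WithTop Λ)} (hφ : φ.Monic) (hle : ⇑ρ ≤ ⇑τ)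
    (hagree : ∀ g : K[X], g.natDegree < φ.natDegree → ρ g = τ g) (hlt : ρ φ < τ φ) (f : K[X]) :
    ρ f ≤ augVal τ φ (ρ φ) f := by
  have hd := natDegree_pos_of_apply_ne hφ hlt.ne
  by_contra! hfm
  obtain ⟨n, hn, hn_min⟩ := exists_first_augVal_eq (μ := τ) (γ := ρ φ) hφ hd f
  set g := f /ₘ φ ^ n
  set a := expCoeff φ f n
  have hga : g %ₘ φ = a := rfl
  have hτa : τ a ≠ ⊤ := fun h => hfm.ne_top (by rw [hn, h, top_add])
  have hρa : ρ a = τ a := hagree a (natDegree_expCoeff_lt hφ hd f n)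
  have hL : augVal τ φ (ρ φ) f < ρ (f %ₘ φ ^ n) := calc
    _ < augVal τ φ (ρ φ) (f %ₘ φ ^ n) := augVal_lt_augVal_modByMonic_pow hφ hfm.ne_top hn_min
    _ = augVal ρ φ (ρ φ) (f %ₘ φ ^ n) := augVal_congr hφ hd (fun g hg => (hagree g hg).symm) _
    _ ≤ ρ (f %ₘ φ ^ n) := augVal_le_self hφ hd le_rfl _
  have hg : τ a < ρ g := by
    have h : augVal τ φ (ρ φ) f < ρ (φ ^ n * g) := by
      rw [eq_sub_of_add_eq' (modByMonic_add_div f (φ ^ n))]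
      exact (lt_min hfm hL).trans_le (ρ.map_sub _ _)
    rwa [ρ.map_mul, ρ.map_pow, hn, add_comm,
      WithTop.add_lt_add_iff_left (WithTop.nsmul_ne_top hlt.ne_top n)] at h
  -- `g = a + φ * (g /ₘ φ)`: `ρ` values the second summand at `τ a`, but `τ` strictly higher
  have hρq : ρ (φ * (g /ₘ φ)) = τ a := by
    rw [eq_sub_of_add_eq' (modByMonic_add_div g φ), hga, ρ.map_sub_eq_of_lt_right (hρa ▸ hg), hρa]
  have hτq : τ a < τ (φ * (g /ₘ φ)) := by
    have hne : ρ (g /ₘ φ) ≠ ⊤ := fun h => hτa (by rw [← hρq, ρ.map_mul, h, add_top])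
    rw [← hρq, ρ.map_mul, τ.map_mul]
    exact WithTop.add_lt_add_of_lt_of_le hne hlt (hle _)
  have hτg : τ g = τ a := by
    rw [← modByMonic_add_div g φ, hga]
    exact τ.map_add_eq_of_lt_left hτq
  exact (hle g).not_gt (hτg ▸ hg)

end LowerBounds

section GreatestLowerBound

variable {μ ν : AddValuation K[X] (WithTop Λ)}

theorem le_augValuation_of_le (hφ : φ.Monic) (hd : 0 < φ.natDegree)
    (hagree : ∀ g : K[X], g.natDegree < φ.natDegree → μ g = ν g) (hlt : μ φ < ν φ)
    {ρ : AddValuation K[X] (WithTop Λ)} (hC : ∀ a : K, ρ (C a) = μ (C a))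
    (hρμ : ⇑ρ ≤ ⇑μ) (hρν : ⇑ρ ≤ ⇑ν) :
    ⇑ρ ≤ ⇑(augValuation hφ hd (isAugmentable_of_lt hφ hagree hlt)) := by
  intro f
  rw [augValuation_apply]
  by_cases hρ : ∀ g : K[X], g.natDegree < φ.natDegree → ρ g = μ g
  · calc ρ f ≤ augVal ν φ (ρ φ) f :=
          le_augVal_of_lt hφ hρν (fun g hg => (hρ g hg).trans (hagree g hg))
            ((hρμ φ).trans_lt hlt) f
      _ ≤ augVal ν φ (μ φ) f := augVal_mono hφ hd (hρμ φ) f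
      _ = augVal μ φ (μ φ) f := augVal_congr hφ hd (fun g hg => (hagree g hg).symm) f
  · push Not at hρ
    obtain ⟨g, hg, hρg⟩ := hρ
    obtain ⟨ψ, hψ, hψg, hρψ, hψagree⟩ := exists_monic_min_natDegree_ne hC hρg
    have hψd := natDegree_pos_of_apply_ne hψ hρψ
    have hψφ : ψ.natDegree < φ.natDegree := hψg.trans_lt hg
    set σ := augValuation hφ hd (isAugmentable_of_lt hφ hagree hlt)
    have hσ (h : K[X]) (hh : h.natDegree < φ.natDegree) : σ h = μ h :=
      augVal_of_natDegree_lt hφ hh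
    calc ρ f ≤ augVal μ ψ (ρ ψ) f :=
          le_augVal_of_lt hψ hρμ hψagree ((hρμ ψ).lt_of_ne hρψ) f
      _ ≤ augVal μ ψ (μ ψ) f := augVal_mono hψ hψd (hρμ ψ) f
      _ = augVal σ ψ (σ ψ) f := by
          rw [hσ ψ hψφ]
          exact augVal_congr hψ hψd (fun h hh => (hσ h (hh.trans hψφ)).symm) f
      _ ≤ σ f := augVal_le_self hψ hψd le_rfl f

theorem exists_greatest_lower_bound_of_lt (hφ : φ.Monic)
    (hagree : ∀ g : K[X], g.natDegree < φ.natDegree → μ g = ν g) (hlt : μ φ < ν φ) :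
    ∃ ρ : AddValuation K[X] (WithTop Λ), (∀ a : K, ρ (C a) = μ (C a)) ∧ ⇑ρ ≤ ⇑μ ∧ ⇑ρ ≤ ⇑ν ∧
      ∀ ρ' : AddValuation K[X] (WithTop Λ), (∀ a : K, ρ' (C a) = μ (C a)) →
        ⇑ρ' ≤ ⇑μ → ⇑ρ' ≤ ⇑ν → ⇑ρ' ≤ ⇑ρ := by
  have hd := natDegree_pos_of_apply_ne hφ hlt.ne
  refine ⟨augValuation hφ hd (isAugmentable_of_lt hφ hagree hlt), fun a => ?_, fun f => ?_,
    fun f => ?_, fun ρ' hC h1 h2 => le_augValuation_of_le hφ hd hagree hlt hC h1 h2⟩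
  · exact augVal_of_natDegree_lt hφ (by simpa using hd)
  · exact augVal_le_self hφ hd le_rfl f
  · rw [augValuation_apply, augVal_congr hφ hd hagree]
    exact augVal_le_self hφ hd hlt.le f

theorem exists_greatest_lower_bound (hC : ∀ a : K, μ (C a) = ν (C a)) :
    ∃ ρ : AddValuation K[X] (WithTop Λ), (∀ a : K, ρ (C a) = μ (C a)) ∧ ⇑ρ ≤ ⇑μ ∧ ⇑ρ ≤ ⇑ν ∧
      ∀ ρ' : AddValuation K[X] (WithTop Λ), (∀ a : K, ρ' (C a) = μ (C a)) →
        ⇑ρ' ≤ ⇑μ → ⇑ρ' ≤ ⇑ν → ⇑ρ' ≤ ⇑ρ := by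
  by_cases h : ∀ f, μ f = ν f
  · exact ⟨μ, fun _ => rfl, le_rfl, fun f => (h f).le, fun _ _ h1 _ => h1⟩
  push Not at h
  obtain ⟨f, hf⟩ := h
  obtain ⟨φ, hφ, -, hne, hagree⟩ := exists_monic_min_natDegree_ne hC hf
  rcases hne.lt_or_gt with hlt | hlt
  · exact exists_greatest_lower_bound_of_lt hφ hagree hlt
  · obtain ⟨ρ, hρC, hρν, hρμ, hmax⟩ :=
      exists_greatest_lower_bound_of_lt hφ (fun g hg => (hagree g hg).symm) hlt
    exact ⟨ρ, fun a => (hρC a).trans (hC a).symm, hρμ, hρν,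
      fun ρ' hC' h1 h2 => hmax ρ' (fun a => (hC' a).trans (hC a)) h2 h1⟩

end GreatestLowerBound

namespace IsValT

variable {v : FieldVal K Λ} {μ : K[X] → WithTop Λ}

noncomputable def toAddValuation (hμ : IsValT v μ) : AddValuation K[X] (WithTop Λ) :=
  AddValuation.of μ hμ.2.1 hμ.1 hμ.2.2.2.1 hμ.2.2.1

theorem of_addValuation (ρ : AddValuation K[X] (WithTop Λ)) (hC : ∀ a : K, ρ (C a) = v.v a) :
    IsValT v ρ :=
  ⟨ρ.map_one, ρ.map_zero, ρ.map_mul, ρ.map_add, hC⟩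

end IsValT

end MLV

open MLV

/-- Any two valuations in `T` have a greatest common lower node `μ ∧ ν` in `T`. -/
theorem statement_17 {K : Type*} [Field K] {Λ : Type*} [AddCommGroup Λ] [LinearOrder Λ] [IsOrderedAddMonoid Λ]
    (v : FieldVal K Λ) (μ ν : Polynomial K → WithTop Λ)
    (hμ : IsValT v μ) (hν : IsValT v ν) :
    ∃ ρ : Polynomial K → WithTop Λ, IsValT v ρ ∧ ρ ≤ μ ∧ ρ ≤ ν ∧
      ∀ ρ' : Polynomial K → WithTop Λ, IsValT v ρ' → ρ' ≤ μ → ρ' ≤ ν → ρ' ≤ ρ := by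
  obtain ⟨ρ, hρC, hρμ, hρν, hmax⟩ := exists_greatest_lower_bound (μ := hμ.toAddValuation)
    (ν := hν.toAddValuation) fun a => (hμ.2.2.2.2 a).trans (hν.2.2.2.2 a).symm
  refine ⟨ρ, IsValT.of_addValuation ρ fun a => (hρC a).trans (hμ.2.2.2.2 a), hρμ, hρν,
    fun ρ' hρ' h1 h2 => ?_⟩
  exact hmax hρ'.toAddValuation (fun a => (hρ'.2.2.2.2 a).trans (hμ.2.2.2.2 a).symm) h1 h2
end

section
/- Let μ, ν ∈ T be two inner nodes. Then μ ∼ ν (μ and ν are equivalent valuations) if and only if the following three conditions hold: (a) μ and ν admit a common key polynomial φ ∈ KP(μ) ∩ KP(ν) which is of minimal degree both in KP(μ) and in KP(ν); (b) for all a ∈ K[x] with deg(a) < deg(μ), μ(a) = ν(a); (c) sv(μ) ∼_sme sv(ν). Moreover, in this case KP(μ) = KP(ν). -/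
open Polynomial

open MLV

/-!
Equivalent valuations have the same key polynomials, because `∼_μ` and `∣_μ` only compare values.
Values of polynomials of degree `< deg μ` are torsion over `Γ`, so an order isomorphism
`Γ_μ ≃ Γ_ν` fixing `Γ` fixes them, which gives (b); it restricts to `⟨Γ, sv μ⟩ ≃ ⟨Γ, sv ν⟩`, which
gives (c).

Conversely, let `φ` be the common key polynomial and `β = μ φ`, `γ = ν φ`. For the expansion
`f = ∑ aₛ φ ^ s` with `deg aₛ < deg φ` we have `μ f = min (μ aₛ + s • β)` and, by (b),
`ν f = min (μ aₛ + s • γ)`. As the `μ aₛ` are torsion over `Γ`, (c) says that `x + k • β ↦ x + k • γ`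
preserves signs on `Γ_μ⁰ + ℤ β`; hence both minima are attained at the same index, and this map is
an order isomorphism `Γ_μ = Γ_μ⁰ + ℤ β ≃ Γ_μ⁰ + ℤ γ = Γ_ν` carrying `μ` to `ν`.
-/

namespace MLV

open Polynomial AddSubgroup

section Group

variable {Λ : Type*} [AddCommGroup Λ]

def adjoinHom (A : AddSubgroup Λ) (β : Λ) : A × ℤ →+ Λ :=
  A.subtype.coprod (zmultiplesHom Λ β)

@[simp]
theorem adjoinHom_apply (A : AddSubgroup Λ) (β : Λ) (p : A × ℤ) :
    adjoinHom A β p = p.1 + p.2 • β := rfl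

theorem range_adjoinHom (s : Set Λ) (β : Λ) :
    (adjoinHom (closure s) β).range = closure (s ∪ {β}) := by
  ext x
  rw [AddSubgroup.closure_union, mem_sup, ← zmultiples_eq_closure, AddMonoidHom.mem_range]
  simp only [mem_zmultiples_iff, Prod.exists, adjoinHom_apply, Subtype.exists]
  constructor
  · rintro ⟨y, hy, k, rfl⟩
    exact ⟨y, hy, k • β, ⟨k, rfl⟩, rfl⟩
  · rintro ⟨y, hy, _, ⟨k, rfl⟩, rfl⟩
    exact ⟨y, hy, k, rfl⟩

def torsionHull (A : AddSubgroup Λ) : AddSubgroup Λ :=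
  (AddCommGroup.torsion (Λ ⧸ A)).comap (QuotientAddGroup.mk' A)

theorem mem_torsionHull {A : AddSubgroup Λ} {x : Λ} :
    x ∈ torsionHull A ↔ ∃ n : ℕ, 0 < n ∧ n • x ∈ A := by
  simp [torsionHull, AddCommGroup.mem_torsion, isOfFinAddOrder_iff_nsmul_eq_zero,
    ← QuotientAddGroup.mk_nsmul]

theorem le_torsionHull (A : AddSubgroup Λ) : A ≤ torsionHull A :=
  fun x hx => mem_torsionHull.mpr ⟨1, one_pos, by simpa using hx⟩

theorem mem_torsionHull_of_nsmul_mem {A : AddSubgroup Λ} {x : Λ} {n : ℕ} (hn : n ≠ 0)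
    (h : n • x ∈ torsionHull A) : x ∈ torsionHull A := by
  simp only [torsionHull, mem_comap, AddCommGroup.mem_torsion, QuotientAddGroup.mk'_apply,
    QuotientAddGroup.mk_nsmul] at h ⊢
  exact h.of_nsmul hn

theorem apply_eq_self_of_mem_closure {A : AddSubgroup Λ} (F : A →+ Λ) {s : Set Λ}
    (hsA : closure s ≤ A) (hfix : ∀ x (hx : x ∈ s), F ⟨x, hsA (subset_closure hx)⟩ = x)
    {x : Λ} (hx : x ∈ closure s) : F ⟨x, hsA hx⟩ = x := by
  have hle : closure s ≤ (F.eqLocus A.subtype).map A.subtype :=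
    (closure_le _).mpr fun y hy => ⟨_, hfix y hy, rfl⟩
  obtain ⟨y, hy, rfl⟩ := hle hx
  exact hy

theorem apply_eq_self_of_mem_torsionHull [IsAddTorsionFree Λ] {A : AddSubgroup Λ} (F : A →+ Λ)
    {s : Set Λ} (hsA : closure s ≤ A)
    (hfix : ∀ x (hx : x ∈ s), F ⟨x, hsA (subset_closure hx)⟩ = x)
    {x : Λ} (hx : x ∈ torsionHull (closure s)) (hxA : x ∈ A) : F ⟨x, hxA⟩ = x := by
  obtain ⟨n, hn, hnx⟩ := mem_torsionHull.mp hx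
  refine nsmul_right_injective hn.ne' ?_
  change n • F ⟨x, hxA⟩ = n • x
  rw [← map_nsmul]
  exact apply_eq_self_of_mem_closure F hsA hfix hnx

variable {P : Type*} [AddCommGroup P] {F G : P →+ Λ} {a a' b b' : WithTop Λ}

def IsJointValue (F G : P →+ Λ) (a b : WithTop Λ) : Prop :=
  (a = ⊤ ∧ b = ⊤) ∨ ∃ p, a = F p ∧ b = G p

theorem IsJointValue.add (h : IsJointValue F G a b) (h' : IsJointValue F G a' b') :
    IsJointValue F G (a + a') (b + b') := by
  rcases h with ⟨rfl, rfl⟩ | ⟨p, rfl, rfl⟩ <;> rcases h' with ⟨rfl, rfl⟩ | ⟨q, rfl, rfl⟩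
  · exact Or.inl ⟨rfl, rfl⟩
  · exact Or.inl ⟨rfl, rfl⟩
  · exact Or.inl ⟨rfl, rfl⟩
  · exact Or.inr ⟨p + q, by simp, by simp⟩

theorem IsJointValue.exists_of_left (h : IsJointValue F G a b) {z : Λ} (hz : a = z) :
    ∃ p, z = F p ∧ b = G p := by
  rcases h with ⟨rfl, -⟩ | ⟨p, rfl, rfl⟩
  · simp at hz
  · exact ⟨p, by exact_mod_cast hz.symm, rfl⟩

theorem IsJointValue.exists_of_right (h : IsJointValue F G a b) {z : Λ} (hz : b = z) :
    ∃ p, a = F p ∧ z = G p := by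
  rcases h with ⟨-, rfl⟩ | ⟨p, rfl, rfl⟩
  · simp at hz
  · exact ⟨p, rfl, by exact_mod_cast hz.symm⟩

end Group

section OrderedGroup

variable {Λ : Type*} [AddCommGroup Λ] [LinearOrder Λ]

def SameCut (A : AddSubgroup Λ) (β γ : Λ) : Prop :=
  ∀ x ∈ A, ∀ k : ℤ, 0 ≤ x + k • β ↔ 0 ≤ x + k • γ

theorem SameCut.mono {A B : AddSubgroup Λ} {β γ : Λ} (h : SameCut B β γ) (hAB : A ≤ B) :
    SameCut A β γ :=
  fun x hx => h x (hAB hx)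

theorem sameCut_of_monotone_addEquiv {A B : AddSubgroup Λ} (ι : A ≃+ B) (hι : Monotone ι)
    {s : Set Λ} (hsA : closure s ≤ A)
    (hfix : ∀ x (hx : x ∈ s), (ι ⟨x, hsA (subset_closure hx)⟩ : Λ) = x)
    {β γ : Λ} (hβ : β ∈ A) (hβγ : (ι ⟨β, hβ⟩ : Λ) = γ) : SameCut (closure s) β γ := by
  intro x hx k
  let F : A →+ Λ := B.subtype.comp ι.toAddMonoidHom
  have hFx : F ⟨x, hsA hx⟩ = x := apply_eq_self_of_mem_closure F hsA hfix hx
  have hmem : x + k • β ∈ A := add_mem (hsA hx) (zsmul_mem hβ k)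
  have hval : (ι ⟨x + k • β, hmem⟩ : Λ) = x + k • γ := by
    change F (⟨x, hsA hx⟩ + k • ⟨β, hβ⟩) = _
    rw [map_add, map_zsmul, hFx]
    exact congrArg (x + k • ·) hβγ
  have hpos : ∀ y : A, (0 : Λ) ≤ y ↔ (0 : Λ) ≤ ι y := fun y => by
    simpa [← Subtype.coe_le_coe] using
      ((hι.strictMono_of_injective ι.injective).le_iff_le (a := 0) (b := y)).symm
  rw [← hval]
  exact hpos ⟨x + k • β, hmem⟩

variable [IsOrderedAddMonoid Λ]

section Cone

variable {G : Type*} [AddCommGroup G] {f g : G →+ Λ}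

theorem le_iff_le_of_nonneg_iff (h : ∀ p, 0 ≤ f p ↔ 0 ≤ g p) (p q : G) :
    f p ≤ f q ↔ g p ≤ g q := by
  simpa [sub_nonneg] using h (q - p)

theorem ker_eq_of_nonneg_iff (h : ∀ p, 0 ≤ f p ↔ 0 ≤ g p) : f.ker = g.ker := by
  ext p
  have h₁ := le_iff_le_of_nonneg_iff h p 0
  have h₂ := le_iff_le_of_nonneg_iff h 0 p
  simp only [map_zero] at h₁ h₂
  simp only [AddMonoidHom.mem_ker, le_antisymm_iff, h₁, h₂]

theorem exists_monotone_addEquiv_of_nonneg_iff (h : ∀ p, 0 ≤ f p ↔ 0 ≤ g p)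
    {S T : AddSubgroup Λ} (hS : f.range = S) (hT : g.range = T) :
    ∃ e : S ≃+ T, Monotone e ∧ ∀ p (hp : f p ∈ S), (e ⟨f p, hp⟩ : Λ) = g p := by
  subst hS hT
  -- both ranges are `G ⧸ ker`
  let e := (QuotientAddGroup.quotientKerEquivRange f).symm.trans
    ((QuotientAddGroup.quotientAddEquivOfEq (ker_eq_of_nonneg_iff h)).trans
      (QuotientAddGroup.quotientKerEquivRange g))
  have he : ∀ p hp, (e ⟨f p, hp⟩ : Λ) = g p := by
    intro p hp
    have : (QuotientAddGroup.quotientKerEquivRange f).symm ⟨f p, hp⟩ = (p : G ⧸ f.ker) :=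
      (AddEquiv.symm_apply_eq _).mpr rfl
    simp only [e, AddEquiv.trans_apply, this, QuotientAddGroup.quotientAddEquivOfEq_mk]
    rfl
  refine ⟨e, ?_, he⟩
  rintro ⟨_, hp⟩ ⟨_, hq⟩ hpq
  obtain ⟨p, rfl⟩ := AddMonoidHom.mem_range.mp hp
  obtain ⟨q, rfl⟩ := AddMonoidHom.mem_range.mp hq
  rw [← Subtype.coe_le_coe, he, he]
  exact (le_iff_le_of_nonneg_iff h p q).mp hpq

theorem IsJointValue.min {a a' b b' : WithTop Λ} (hfg : ∀ p, 0 ≤ f p ↔ 0 ≤ g p)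
    (h : IsJointValue f g a b) (h' : IsJointValue f g a' b') :
    IsJointValue f g (min a a') (min b b') := by
  rcases h with ⟨rfl, rfl⟩ | ⟨p, rfl, rfl⟩
  · simpa using h'
  rcases h' with ⟨rfl, rfl⟩ | ⟨q, rfl, rfl⟩
  · exact Or.inr ⟨p, by simp, by simp⟩
  rcases le_total (f p) (f q) with hpq | hqp
  · exact Or.inr ⟨p, by simp [hpq], by simp [(le_iff_le_of_nonneg_iff hfg p q).mp hpq]⟩
  · exact Or.inr ⟨q, by simp [hqp], by simp [(le_iff_le_of_nonneg_iff hfg q p).mp hqp]⟩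

end Cone

theorem SameCut.torsionHull {A : AddSubgroup Λ} {β γ : Λ} (h : SameCut A β γ) :
    SameCut (torsionHull A) β γ := by
  intro x hx k
  obtain ⟨n, hn, hnx⟩ := mem_torsionHull.mp hx
  have hscale : ∀ δ : Λ, n • (x + k • δ) = n • x + ((n : ℤ) * k) • δ := fun δ => by
    rw [smul_add, mul_zsmul, natCast_zsmul]
  rw [← nsmul_nonneg_iff hn.ne', hscale, h _ hnx, ← hscale, nsmul_nonneg_iff hn.ne']

theorem exists_monotone_addEquiv_closure_union {s : Set Λ} {β γ : Λ}
    (h : SameCut (closure s) β γ) :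
    ∃ e : closure (s ∪ {β}) ≃+ closure (s ∪ {γ}), Monotone e ∧
      ∀ x ∈ closure s, ∀ (k : ℤ) (y : Λ) (hy : y ∈ closure (s ∪ {β})),
        y = x + k • β → (e ⟨y, hy⟩ : Λ) = x + k • γ := by
  obtain ⟨e, he, hval⟩ := exists_monotone_addEquiv_of_nonneg_iff
    (fun p => h p.1 p.1.2 p.2) (range_adjoinHom s β) (range_adjoinHom s γ)
  refine ⟨e, he, fun x hx k y hy hyx => ?_⟩
  subst hyx
  exact hval (⟨x, hx⟩, k) hy

end OrderedGroup

section PolynomialInduction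

variable {K : Type*} [Field K]

theorem modByMonic_add_divByMonic_mul (p q : K[X]) : p %ₘ q + p /ₘ q * q = p := by
  rw [mul_comm]
  exact modByMonic_add_div p q

theorem induction_modByMonic {a : K[X]} (ha : a.Monic) (ha0 : 0 < a.natDegree)
    {P : K[X] → Prop} (small : ∀ r, r.natDegree < a.natDegree → P r)
    (step : ∀ r q, r.natDegree < a.natDegree → P q → P (r + q * a)) (f : K[X]) : P f := by
  induction hn : f.natDegree using Nat.strong_induction_on generalizing f with
  | _ n ih =>
    by_cases hf : f.natDegree < a.natDegree
    · exact small f hf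
    have ha1 : a ≠ 1 := fun h => by simp [h] at ha0
    rw [← modByMonic_add_divByMonic_mul f a]
    refine step _ _ (natDegree_modByMonic_lt f ha ha1) (ih _ ?_ _ rfl)
    rw [natDegree_divByMonic f ha]
    omega

end PolynomialInduction

section KeyPolynomials

variable {K : Type*} [Field K] {Λ : Type*} [LinearOrder Λ] {μ : K[X] → WithTop Λ}

theorem IsInnerNode.exists_isMinKeyPol (hin : IsInnerNode μ) :
    ∃ φ, IsMinKeyPol μ φ ∧ φ.natDegree = degOf μ := by
  obtain ⟨ψ, hψ⟩ := hin
  obtain ⟨φ, hφ, hdeg⟩ := Nat.sInf_mem (⟨ψ.natDegree, ψ, hψ, rfl⟩ :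
    {n : ℕ | ∃ φ, IsKeyPol μ φ ∧ φ.natDegree = n}.Nonempty)
  exact ⟨φ, ⟨hφ, fun ψ hψ => hdeg ▸ Nat.sInf_le ⟨ψ, hψ, rfl⟩⟩, hdeg⟩

theorem degOf_le {φ : K[X]} (hφ : IsKeyPol μ φ) : degOf μ ≤ φ.natDegree :=
  Nat.sInf_le ⟨φ, hφ, rfl⟩

theorem IsMinKeyPol.degOf_eq {φ : K[X]} (hφ : IsMinKeyPol μ φ) : degOf μ = φ.natDegree := by
  obtain ⟨φ₀, hφ₀, hdeg⟩ := IsInnerNode.exists_isMinKeyPol ⟨φ, hφ.1⟩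
  exact le_antisymm (degOf_le hφ.1) (hdeg ▸ hφ.2 φ₀ hφ₀.1)

end KeyPolynomials

section Minimal

variable {K : Type*} [Field K] {Λ : Type*} [AddCommGroup Λ] [LinearOrder Λ]
  [IsOrderedAddMonoid Λ] (w : AddValuation K[X] (WithTop Λ)) {a : K[X]}

theorem isMuMinimal_iff :
    IsMuMinimal w a ↔ 0 < a.natDegree ∧
      ∀ r q, r.natDegree < a.natDegree → w (r + q * a) = min (w r) (w (q * a)) := by
  refine and_congr_right fun _ => ⟨fun hmin r q hr => ?_, fun hval f hf0 hf ⟨q, hq⟩ => ?_⟩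
  · rcases eq_or_ne (w r) (w (q * a)) with heq | hne
    · refine le_antisymm ?_ (w.map_add _ _)
      by_contra! hlt
      rw [← heq, min_self] at hlt
      have hr0 : r ≠ 0 := by rintro rfl; simp at hlt
      refine hmin r hr0 (degree_lt_degree hr) ⟨-q, ?_⟩
      rwa [MuEquiv, neg_mul, sub_neg_eq_add]
    · exact w.map_add_of_distinct_val hne
  · have h := hval f (-q) (natDegree_lt_natDegree hf0 hf)
    rw [neg_mul, ← sub_eq_add_neg] at h
    rw [MuEquiv, h] at hq
    exact (min_le_left _ _).not_gt hq

variable {w}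

theorem IsMuMinimal.val_add_mul (ha : IsMuMinimal w a) {r : K[X]} (q : K[X])
    (hr : r.natDegree < a.natDegree) : w (r + q * a) = min (w r) (w (q * a)) :=
  ((isMuMinimal_iff w).mp ha).2 r q hr

theorem IsMuMinimal.muDvd_iff (ha : IsMuMinimal w a) (hm : a.Monic) (g : K[X]) :
    MuDvd w a g ↔ w g < w (g %ₘ a) := by
  have hrem : (g %ₘ a).natDegree < a.natDegree :=
    natDegree_modByMonic_lt g hm fun h => by simpa [h] using ha.1
  constructor
  · rintro ⟨q, hq⟩
    have hsplit : g - q * a = g %ₘ a + (g /ₘ a - q) * a := by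
      linear_combination -(modByMonic_add_divByMonic_mul g a)
    rw [MuEquiv, hsplit, ha.val_add_mul _ hrem] at hq
    exact hq.trans_le (min_le_left _ _)
  · intro h
    refine ⟨g /ₘ a, ?_⟩
    have : g - g /ₘ a * a = g %ₘ a := by
      linear_combination -(modByMonic_add_divByMonic_mul g a)
    rwa [MuEquiv, this]

theorem IsMuMinimal.val_le_of_monic (ha : IsMuMinimal w a) (hm : a.Monic) {ψ : K[X]}
    (hψ : ψ.Monic) (hdeg : ψ.natDegree = a.natDegree) : w ψ ≤ w a := by
  have hlt : (ψ - a).natDegree < a.natDegree := by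
    rcases eq_or_ne (ψ - a) 0 with h | h
    · simpa [h] using ha.1
    refine natDegree_lt_natDegree h ((degree_sub_lt_left ?_ hψ.ne_zero ?_).trans_eq ?_) <;>
      simp [degree_eq_natDegree, hψ.ne_zero, hm.ne_zero, hdeg, hψ.leadingCoeff, hm.leadingCoeff]
  calc w ψ = w (ψ - a + 1 * a) := by ring_nf
    _ = min (w (ψ - a)) (w (1 * a)) := ha.val_add_mul 1 hlt
    _ ≤ w a := by simp

theorem IsMinKeyPol.val_eq {φ ψ : K[X]} (hφ : IsMinKeyPol w φ) (hψ : IsMinKeyPol w ψ) :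
    w φ = w ψ := by
  have hdeg : φ.natDegree = ψ.natDegree := le_antisymm (hφ.2 ψ hψ.1) (hψ.2 φ hφ.1)
  exact le_antisymm (hψ.1.2.1.val_le_of_monic hψ.1.1 hφ.1.1 hdeg)
    (hφ.1.2.1.val_le_of_monic hφ.1.1 hψ.1.1 hdeg.symm)

end Minimal

section Incommensurable

variable {K : Type*} [Field K] {Λ : Type*} [AddCommGroup Λ] [LinearOrder Λ]
  [IsOrderedAddMonoid Λ]

structure IsIncommensurable (w : AddValuation K[X] (WithTop Λ)) (H : AddSubgroup Λ) (a : K[X])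
    (δ : Λ) : Prop where
  monic : a.Monic
  natDegree_pos : 0 < a.natDegree
  val_eq : w a = δ
  nsmul_not_mem : ∀ n : ℕ, n ≠ 0 → n • δ ∉ H
  val_mem : ∀ r (z : Λ), r.natDegree < a.natDegree → w r = z → z ∈ H

namespace IsIncommensurable

variable {w : AddValuation K[X] (WithTop Λ)} {H : AddSubgroup Λ} {a : K[X]} {δ : Λ}

theorem add_ne_of_mem {x y : Λ} {n : ℕ} (h : IsIncommensurable w H a δ) (hx : x ∈ H)
    (hy : y - n • δ ∈ H) : y + δ ≠ x := by
  rintro rfl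
  refine h.nsmul_not_mem (n + 1) n.succ_ne_zero ?_
  convert sub_mem hx hy using 1
  rw [succ_nsmul]
  abel

theorem val_mul_eq {q : K[X]} {z : Λ} (h : IsIncommensurable w H a δ) (hq : w (q * a) = z) :
    ∃ y : Λ, w q = y ∧ y + δ = z := by
  rw [w.map_mul, h.val_eq] at hq
  obtain ⟨y, hy⟩ := WithTop.ne_top_iff_exists.mp fun htop : w q = ⊤ => by simp [htop] at hq
  exact ⟨y, hy.symm, by rw [← hy] at hq; exact_mod_cast hq⟩

/-- `w r ∈ H` and `w (q * a) ∈ H + (n + 1) • δ` cannot coincide unless both are `⊤`. -/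
theorem val_add_mul_of_exists {r q : K[X]} (h : IsIncommensurable w H a δ)
    (hr : r.natDegree < a.natDegree) (hq : ∀ z : Λ, w q = z → ∃ n : ℕ, z - n • δ ∈ H) :
    w (r + q * a) = min (w r) (w (q * a)) := by
  rcases eq_or_ne (w r) (w (q * a)) with heq | hne
  · by_cases htop : w r = ⊤
    · rw [← heq, htop, min_self, eq_top_iff]
      simpa [← heq, htop] using w.map_add r (q * a)
    obtain ⟨z, hz⟩ := WithTop.ne_top_iff_exists.mp htop
    obtain ⟨y, hy, hyz⟩ := h.val_mul_eq (hz ▸ heq).symm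
    obtain ⟨n, hn⟩ := hq y hy
    exact absurd hyz (h.add_ne_of_mem (h.val_mem r z hr hz.symm) hn)
  · exact w.map_add_of_distinct_val hne

theorem exists_sub_nsmul_mem (h : IsIncommensurable w H a δ) (f : K[X]) :
    ∀ z : Λ, w f = z → ∃ n : ℕ, z - n • δ ∈ H := by
  induction f using induction_modByMonic h.monic h.natDegree_pos with
  | small r hr => exact fun z hz => ⟨0, by simpa using h.val_mem r z hr hz⟩
  | step r q hr hq =>
    intro z hz
    rw [h.val_add_mul_of_exists hr hq] at hz
    rcases min_choice (w r) (w (q * a)) with hmin | hmin <;> rw [hmin] at hz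
    · exact ⟨0, by simpa using h.val_mem r z hr hz⟩
    · obtain ⟨y, hy, rfl⟩ := h.val_mul_eq hz
      obtain ⟨n, hn⟩ := hq y hy
      exact ⟨n + 1, by rwa [succ_nsmul, add_sub_add_right_eq_sub]⟩

theorem isMuMinimal (h : IsIncommensurable w H a δ) : IsMuMinimal w a :=
  (isMuMinimal_iff w).mpr ⟨h.natDegree_pos, fun _ q hr =>
    h.val_add_mul_of_exists hr (h.exists_sub_nsmul_mem q)⟩

theorem natDegree_modByMonic_lt (h : IsIncommensurable w H a δ) (g : K[X]) :
    (g %ₘ a).natDegree < a.natDegree :=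
  Polynomial.natDegree_modByMonic_lt g h.monic fun h1 => by simpa [h1] using h.natDegree_pos

theorem exists_val_not_mem_of_muDvd {g : K[X]} (h : IsIncommensurable w H a δ)
    (hg : MuDvd w a g) : ∃ z : Λ, w g = z ∧ z ∉ H := by
  have hlt := (h.isMuMinimal.muDvd_iff h.monic g).mp hg
  have hval := h.isMuMinimal.val_add_mul (g /ₘ a) (h.natDegree_modByMonic_lt g)
  rw [modByMonic_add_divByMonic_mul] at hval
  rw [hval] at hlt
  have hgq : w g = w (g /ₘ a * a) := by
    rw [hval, min_eq_right ((min_lt_iff.mp hlt).resolve_left (lt_irrefl _)).le]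
  obtain ⟨z, hz⟩ := WithTop.ne_top_iff_exists.mp (ne_top_of_lt (hval ▸ hlt))
  obtain ⟨y, hy, hyz⟩ := h.val_mul_eq (hgq ▸ hz.symm)
  obtain ⟨n, hn⟩ := h.exists_sub_nsmul_mem _ y hy
  exact ⟨z, hz.symm, fun hzH => h.add_ne_of_mem hzH hn hyz⟩

theorem val_mem_of_not_muDvd {g : K[X]} (h : IsIncommensurable w H a δ) (hg : ¬ MuDvd w a g)
    (z : Λ) (hz : w g = z) : z ∈ H := by
  have hval := h.isMuMinimal.val_add_mul (g /ₘ a) (h.natDegree_modByMonic_lt g)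
  rw [modByMonic_add_divByMonic_mul] at hval
  rw [h.isMuMinimal.muDvd_iff h.monic, not_lt] at hg
  exact h.val_mem _ z (h.natDegree_modByMonic_lt g) (le_antisymm (hval ▸ min_le_left _ _) hg ▸ hz)

theorem isKeyPol (h : IsIncommensurable w H a δ) : IsKeyPol w a := by
  refine ⟨h.monic, h.isMuMinimal, h.val_eq ▸ WithTop.coe_ne_top, ?_, ?_⟩
  · rintro ⟨f, hf⟩
    have hunit : (-1 : K[X]).natDegree < a.natDegree := by simpa using h.natDegree_pos
    rw [MuEquiv, sub_eq_neg_add, h.isMuMinimal.val_add_mul f hunit] at hf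
    exact (min_le_right _ _).not_gt hf
  · intro f g hfg
    by_contra! hnot
    obtain ⟨z, hz, hzH⟩ := h.exists_val_not_mem_of_muDvd hfg
    rw [w.map_mul] at hz
    obtain ⟨x, hx⟩ := WithTop.ne_top_iff_exists.mp fun htop : w f = ⊤ => by simp [htop] at hz
    obtain ⟨y, hy⟩ := WithTop.ne_top_iff_exists.mp fun htop : w g = ⊤ => by simp [htop] at hz
    rw [← hx, ← hy, ← WithTop.coe_add, WithTop.coe_inj] at hz
    exact hzH (hz ▸ add_mem (h.val_mem_of_not_muDvd hnot.1 x hx.symm)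
      (h.val_mem_of_not_muDvd hnot.2 y hy.symm))

end IsIncommensurable

end Incommensurable

section Extensions

variable {K : Type*} [Field K] {Λ : Type*} [AddCommGroup Λ] [LinearOrder Λ]
  [IsOrderedAddMonoid Λ] {v : FieldVal K Λ}

theorem IsValT.exists_addValuation {μ : K[X] → WithTop Λ} (h : IsValT v μ) :
    ∃ w : AddValuation K[X] (WithTop Λ), ⇑w = μ ∧ ∀ c, w (C c) = v.v c :=
  ⟨.of μ h.2.1 h.1 h.2.2.2.1 h.2.2.1, rfl, h.2.2.2.2⟩

theorem baseGroup_le_valGroup {μ : K[X] → WithTop Λ} (hμC : ∀ c, μ (C c) = v.v c) :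
    baseGroup v ≤ valGroup μ :=
  closure_mono fun _ ⟨c, hc⟩ => ⟨C c, (hμC c).trans hc⟩

theorem smeEquiv_iff_sameCut {β γ : Λ} : SmeEquiv v β γ ↔ SameCut (baseGroup v) β γ := by
  constructor
  · rintro ⟨ι, hmono, hfix, hmap⟩
    exact sameCut_of_monotone_addEquiv ι hmono (closure_mono Set.subset_union_left) hfix _ hmap
  · intro h
    obtain ⟨e, he, hval⟩ := exists_monotone_addEquiv_closure_union h
    refine ⟨e, he, fun x hx => ?_, ?_⟩
    · simpa using hval x (subset_closure hx) 0 x _ (by simp)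
    · simpa using hval 0 (zero_mem _) 1 β _ (by simp)

theorem val_C_mem_baseGroup {w : AddValuation K[X] (WithTop Λ)} (hwC : ∀ c, w (C c) = v.v c)
    (c : K) (z : Λ) (hz : w (C c) = z) : z ∈ baseGroup v :=
  subset_closure ⟨c, (hwC c).symm.trans hz⟩

/-- A polynomial of least degree with a value that is not torsion over `Γ` would, made monic, be
a key polynomial. -/
theorem val_mem_torsionHull_of_natDegree_lt {w : AddValuation K[X] (WithTop Λ)}
    (hwC : ∀ c, w (C c) = v.v c) {g : K[X]} (hg : g.natDegree < degOf w) (z : Λ)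
    (hz : w g = z) : z ∈ torsionHull (baseGroup v) := by
  induction hn : g.natDegree using Nat.strong_induction_on generalizing g z with
  | _ n ih =>
  by_contra hzH
  have hg0 : g ≠ 0 := by rintro rfl; simp at hz
  have hn0 : n ≠ 0 := by
    rintro rfl
    rw [eq_C_of_natDegree_eq_zero hn] at hz
    exact hzH (le_torsionHull _ (val_C_mem_baseGroup hwC _ z hz))
  set c := g.leadingCoeff⁻¹
  obtain ⟨t, ht⟩ := WithTop.ne_top_iff_exists.mp
    (v.ne_top' c (inv_ne_zero (leadingCoeff_ne_zero.mpr hg0)))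
  have hdeg : (g * C c).natDegree = n := by rw [natDegree_mul_leadingCoeff_inv _ hg0, hn]
  have hlt : (g * C c).natDegree < degOf w := by rw [hdeg, ← hn]; exact hg
  have hinc : IsIncommensurable w (torsionHull (baseGroup v)) (g * C c) (z + t) :=
    { monic := monic_mul_leadingCoeff_inv hg0
      natDegree_pos := hdeg ▸ Nat.pos_of_ne_zero hn0
      val_eq := by rw [w.map_mul, hz, hwC, ← ht, WithTop.coe_add]
      nsmul_not_mem := fun m hm hmem => hzH <| by
        simpa using sub_mem (mem_torsionHull_of_nsmul_mem hm hmem)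
          (le_torsionHull _ (val_C_mem_baseGroup hwC c t ((hwC c).trans ht.symm)))
      val_mem := fun r y hr hy => ih _ (hdeg ▸ hr) (hr.trans hlt) y hy rfl }
  exact (degOf_le hinc.isKeyPol).not_gt hlt

end Extensions

namespace ValEquiv

section Transfer

variable {K : Type*} [Field K] {Λ : Type*} [AddCommGroup Λ] [LinearOrder Λ]
  {μ ν : K[X] → WithTop Λ}

theorem le_iff (hE : ValEquiv μ ν) (f g : K[X]) : μ f ≤ μ g ↔ ν f ≤ ν g := by
  obtain ⟨ι, hmono, htop, heq⟩ := hE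
  rcases eq_or_ne (μ g) ⊤ with hg | hg
  · simp [hg, (htop g).mp hg]
  rcases eq_or_ne (μ f) ⊤ with hf | hf
  · simp [hf, (htop f).mp hf, hg, mt (htop g).mpr hg]
  obtain ⟨x, hx⟩ := WithTop.ne_top_iff_exists.mp hf
  obtain ⟨y, hy⟩ := WithTop.ne_top_iff_exists.mp hg
  rw [heq f x hx.symm, heq g y hy.symm, WithTop.coe_le_coe, Subtype.coe_le_coe,
    (hmono.strictMono_of_injective ι.injective).le_iff_le]
  change μ f ≤ μ g ↔ x ≤ y
  rw [← hx, ← hy, WithTop.coe_le_coe]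

theorem lt_iff (hE : ValEquiv μ ν) (f g : K[X]) : μ f < μ g ↔ ν f < ν g := by
  simp only [lt_iff_not_ge, hE.le_iff]

theorem isKeyPol_iff (hE : ValEquiv μ ν) (φ : K[X]) : IsKeyPol μ φ ↔ IsKeyPol ν φ := by
  obtain ⟨_, _, htop, _⟩ := id hE
  simp only [IsKeyPol, IsMuMinimal, IsMuIrreducible, MuDvd, MuEquiv, hE.lt_iff, ne_eq, htop]

theorem isMinKeyPol_iff (hE : ValEquiv μ ν) (φ : K[X]) : IsMinKeyPol μ φ ↔ IsMinKeyPol ν φ := by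
  simp only [IsMinKeyPol, hE.isKeyPol_iff]

end Transfer

variable {K : Type*} [Field K] {Λ : Type*} [AddCommGroup Λ] [LinearOrder Λ]
  [IsOrderedAddMonoid Λ] {v : FieldVal K Λ} {μ ν : K[X] → WithTop Λ}

theorem apply_eq_of_mem_gammaSet (ι : valGroup μ ≃+ valGroup ν)
    (heq : ∀ f (z : Λ) (h : μ f = z), ν f = (ι ⟨z, subset_closure ⟨f, h⟩⟩ : Λ))
    (hμC : ∀ c, μ (C c) = v.v c) (hνC : ∀ c, ν (C c) = v.v c) (x : Λ) (hx : x ∈ gammaSet v) :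
    (ι ⟨x, baseGroup_le_valGroup hμC (subset_closure hx)⟩ : Λ) = x := by
  obtain ⟨c, hc⟩ := hx
  have h := heq (C c) x ((hμC c).trans hc)
  rw [hνC] at h
  exact WithTop.coe_inj.mp (h.symm.trans hc)

theorem eq_of_natDegree_lt {w : AddValuation K[X] (WithTop Λ)} (hE : ValEquiv w ν)
    (hwC : ∀ c, w (C c) = v.v c) (hνC : ∀ c, ν (C c) = v.v c) {a : K[X]}
    (ha : a.natDegree < degOf w) : w a = ν a := by
  obtain ⟨ι, -, htop, heq⟩ := hE
  rcases eq_or_ne (w a) ⊤ with h | h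
  · rw [h, (htop a).mp h]
  obtain ⟨z, hz⟩ := WithTop.ne_top_iff_exists.mp h
  rw [← hz, heq a z hz.symm, WithTop.coe_inj]
  exact (apply_eq_self_of_mem_torsionHull ((valGroup ν).subtype.comp ι.toAddMonoidHom)
    (baseGroup_le_valGroup hwC) (apply_eq_of_mem_gammaSet ι heq hwC hνC)
    (val_mem_torsionHull_of_natDegree_lt hwC ha z hz.symm) _).symm

theorem smeEquiv (hE : ValEquiv μ ν) (hμC : ∀ c, μ (C c) = v.v c)
    (hνC : ∀ c, ν (C c) = v.v c) {φ : K[X]} {β γ : Λ} (hβ : μ φ = β) (hγ : ν φ = γ) :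
    SmeEquiv v β γ := by
  obtain ⟨ι, hmono, -, heq⟩ := hE
  refine smeEquiv_iff_sameCut.mpr (sameCut_of_monotone_addEquiv ι hmono
    (baseGroup_le_valGroup hμC) (apply_eq_of_mem_gammaSet ι heq hμC hνC)
    (subset_closure ⟨φ, hβ⟩) ?_)
  rw [← WithTop.coe_inj, ← heq φ β hβ, hγ]

end ValEquiv

section Backward

variable {K : Type*} [Field K] {Λ : Type*} [AddCommGroup Λ]

theorem valGroup_eq_range_adjoinHom {μ : K[X] → WithTop Λ} {S : Set Λ} {β : Λ}
    (hS : S ⊆ valSet μ) (hβ : β ∈ valSet μ)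
    (hval : ∀ f (z : Λ), μ f = z → z ∈ (adjoinHom (closure S) β).range) :
    valGroup μ = (adjoinHom (closure S) β).range := by
  refine le_antisymm ((closure_le _).mpr fun z ⟨f, hf⟩ => hval f z hf) ?_
  rw [range_adjoinHom]
  exact closure_mono (Set.union_subset hS (Set.singleton_subset_iff.mpr hβ))

variable [LinearOrder Λ] [IsOrderedAddMonoid Λ] {w w' : AddValuation K[X] (WithTop Λ)} {φ : K[X]}
  {β γ : Λ}

theorem isJointValue_of_isMinKeyPol (hφ : IsMinKeyPol w φ) (hφ' : IsMuMinimal w' φ)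
    (hb : ∀ a : K[X], a.natDegree < degOf w → w a = w' a) (hβ : w φ = β) (hγ : w' φ = γ)
    (hcut : SameCut (closure (degZeroSet w)) β γ) (f : K[X]) :
    IsJointValue (adjoinHom (closure (degZeroSet w)) β) (adjoinHom (closure (degZeroSet w)) γ)
      (w f) (w' f) := by
  have hdeg := hφ.degOf_eq
  have hsmall (r : K[X]) (hr : r.natDegree < φ.natDegree) :
      IsJointValue (adjoinHom (closure (degZeroSet w)) β)
        (adjoinHom (closure (degZeroSet w)) γ) (w r) (w' r) := by
    rw [← hb r (hdeg ▸ hr)]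
    rcases eq_or_ne (w r) ⊤ with h | h
    · exact Or.inl ⟨h, h⟩
    obtain ⟨z, hz⟩ := WithTop.ne_top_iff_exists.mp h
    have hr0 : r ≠ 0 := by rintro rfl; simp at h
    exact Or.inr ⟨(⟨z, subset_closure ⟨r, hr0, hdeg ▸ hr, hz.symm⟩⟩, 0), by simp [hz],
      by simp [hz]⟩
  induction f using induction_modByMonic hφ.1.1 hφ.1.2.1.1 with
  | small r hr => exact hsmall r hr
  | step r q hr hq =>
    rw [hφ.1.2.1.val_add_mul q hr, hφ'.val_add_mul q hr, w.map_mul, w'.map_mul]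
    exact (hsmall r hr).min (fun p => hcut p.1 p.1.2 p.2)
      (hq.add (Or.inr ⟨(0, 1), by simp [hβ], by simp [hγ]⟩))

theorem valEquiv_of_sameCut (hφ : IsMinKeyPol w φ) (hφ' : IsMuMinimal w' φ)
    (hb : ∀ a : K[X], a.natDegree < degOf w → w a = w' a) (hβ : w φ = β) (hγ : w' φ = γ)
    (hcut : SameCut (closure (degZeroSet w)) β γ) : ValEquiv w w' := by
  have hjoint := isJointValue_of_isMinKeyPol hφ hφ' hb hβ hγ hcut
  have hS := valGroup_eq_range_adjoinHom (μ := w) (S := degZeroSet w)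
    (fun z ⟨r, _, _, hr⟩ => ⟨r, hr⟩) ⟨φ, hβ⟩ fun f z hz => by
      obtain ⟨p, hp, -⟩ := (hjoint f).exists_of_left hz
      exact ⟨p, hp.symm⟩
  have hT := valGroup_eq_range_adjoinHom (μ := w') (S := degZeroSet w)
    (fun z ⟨r, _, hr, hrz⟩ => ⟨r, (hb r hr).symm.trans hrz⟩) ⟨φ, hγ⟩ fun f z hz => by
      obtain ⟨p, -, hp⟩ := (hjoint f).exists_of_right hz
      exact ⟨p, hp.symm⟩
  obtain ⟨e, he, hval⟩ := exists_monotone_addEquiv_of_nonneg_iff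
    (fun p => hcut p.1 p.1.2 p.2) hS.symm hT.symm
  refine ⟨e, he, fun f => ?_, fun f z hz => ?_⟩
  · rcases hjoint f with ⟨h, h'⟩ | ⟨p, h, h'⟩ <;> simp [h, h']
  · obtain ⟨p, rfl, hp⟩ := (hjoint f).exists_of_left hz
    rw [hp, WithTop.coe_inj]
    exact (hval p _).symm

end Backward

end MLV

theorem statement_18_general {K : Type*} [Field K] {Λ : Type*} [AddCommGroup Λ] [LinearOrder Λ] [IsOrderedAddMonoid Λ]
    (v : FieldVal K Λ) (μ ν : Polynomial K → WithTop Λ)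
    (hμ : IsValT v μ) (hν : IsValT v ν)
    (hinμ : IsInnerNode μ) :
    (ValEquiv μ ν ↔
      ((∃ φ : Polynomial K, IsMinKeyPol μ φ ∧ IsMinKeyPol ν φ) ∧
       (∀ a : Polynomial K, a.natDegree < degOf μ → μ a = ν a) ∧
       ∃ (φ ψ : Polynomial K) (β γ : Λ),
         IsMinKeyPol μ φ ∧ IsMinKeyPol ν ψ ∧
         μ φ = (β : WithTop Λ) ∧ ν ψ = (γ : WithTop Λ) ∧ SmeEquiv v β γ)) ∧
    (ValEquiv μ ν → ∀ φ : Polynomial K, IsKeyPol μ φ ↔ IsKeyPol ν φ) := by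
  obtain ⟨w, rfl, hwC⟩ := hμ.exists_addValuation
  obtain ⟨w', rfl, hw'C⟩ := hν.exists_addValuation
  refine ⟨⟨fun hE => ?_, fun ⟨⟨φ, hφ, hφ'⟩, hb, φ₁, ψ₁, β, γ, hφ₁, hψ₁, hβ, hγ, hsme⟩ => ?_⟩,
    fun hE => hE.isKeyPol_iff⟩
  · obtain ⟨φ, hφ, -⟩ := hinμ.exists_isMinKeyPol
    have hφ' := (hE.isMinKeyPol_iff φ).mp hφ
    obtain ⟨β, hβ⟩ := WithTop.ne_top_iff_exists.mp hφ.1.2.2.1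
    obtain ⟨γ, hγ⟩ := WithTop.ne_top_iff_exists.mp hφ'.1.2.2.1
    exact ⟨⟨φ, hφ, hφ'⟩, fun a ha => hE.eq_of_natDegree_lt hwC hw'C ha, φ, φ, β, γ, hφ, hφ',
      hβ.symm, hγ.symm, hE.smeEquiv hwC hw'C hβ.symm hγ.symm⟩
  · have hcut : SameCut (AddSubgroup.closure (degZeroSet w)) β γ :=
      (smeEquiv_iff_sameCut.mp hsme).torsionHull.mono <| (AddSubgroup.closure_le _).mpr
        fun z ⟨_, _, hr, hz⟩ => val_mem_torsionHull_of_natDegree_lt hwC hr z hz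
    exact valEquiv_of_sameCut hφ hφ'.1.2.1 hb ((hφ.val_eq hφ₁).trans hβ)
      ((hφ'.val_eq hψ₁).trans hγ) hcut

/-- Two inner nodes `μ, ν` are equivalent valuations if and only if (a) they admit a common
key polynomial of minimal degree, (b) they agree on all polynomials of degree `< deg(μ)`,
and (c) `sv(μ) ∼_sme sv(ν)`. In this case `KP(μ) = KP(ν)`. -/
theorem statement_18 {K : Type*} [Field K] {Λ : Type*} [AddCommGroup Λ] [LinearOrder Λ] [IsOrderedAddMonoid Λ]
    (v : FieldVal K Λ) (μ ν : Polynomial K → WithTop Λ)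
    (hμ : IsValT v μ) (hν : IsValT v ν)
    (hinμ : IsInnerNode μ) (hinν : IsInnerNode ν) :
    (ValEquiv μ ν ↔
      ((∃ φ : Polynomial K, IsMinKeyPol μ φ ∧ IsMinKeyPol ν φ) ∧
       (∀ a : Polynomial K, a.natDegree < degOf μ → μ a = ν a) ∧
       ∃ (φ ψ : Polynomial K) (β γ : Λ),
         IsMinKeyPol μ φ ∧ IsMinKeyPol ν ψ ∧
         μ φ = (β : WithTop Λ) ∧ ν ψ = (γ : WithTop Λ) ∧ SmeEquiv v β γ)) ∧
    (ValEquiv μ ν → ∀ φ : Polynomial K, IsKeyPol μ φ ↔ IsKeyPol ν φ) :=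
  statement_18_general v μ ν hμ hν hinμ
end
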